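/- arXiv:2009.10389 — 9 statements merged into one kernel-verified Lean document; each statement's English description precedes it below -/
import Mathlib

section
/- Let V be a finite-dimensional real vector space, A and B symmetric bilinear forms on V such that the complex symmetric bilinear form A + iB on the complexification of V is nondegenerate. Then there exists a real number t such that A + tB is nondegenerate. -/
open TensorProduct

/-- Nondegeneracy of a bilinear form. -/
def BilinNondegen {R V : Type*} [CommRing R] [AddCommGroup V] [Module R V]
    (B : V →ₗ[R] V →ₗ[R] R) : Prop :=
  ∀ v : V, (∀ w : V, B v w = 0) → v = 0

lemma bilinNondegen_iff_separatingLeft {R V : Type*} [CommRing R] [AddCommGroup V] [Module R V]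
    (B : V →ₗ[R] V →ₗ[R] R) : BilinNondegen B ↔ B.SeparatingLeft := by
  constructor
  · intro h v hv
    exact h v hv
  · intro h v hv
    exact h v hv

/-- Let `V` be a finite-dimensional real vector space, `A` and `B` symmetric
bilinear forms on `V` such that the complex symmetric bilinear form `A + iB` on the
complexification of `V` is nondegenerate.  Then there exists a real number `t` such that
`A + tB` is nondegenerate. -/
theorem exists_real_nondegenerate
    (V : Type*) [AddCommGroup V] [Module ℝ V] [FiniteDimensional ℝ V]
    (A B : V →ₗ[ℝ] V →ₗ[ℝ] ℝ)
    (hA : ∀ v w, A v w = A w v) (hB : ∀ v w, B v w = B w v)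
    (C : (ℂ ⊗[ℝ] V) →ₗ[ℂ] (ℂ ⊗[ℝ] V) →ₗ[ℂ] ℂ)
    (hC : ∀ v w : V, C (1 ⊗ₜ v) (1 ⊗ₜ w) = (A v w : ℂ) + Complex.I * (B v w : ℂ))
    (hCnd : BilinNondegen C) :
    ∃ t : ℝ, BilinNondegen (A + t • B) := by
  classical
  set n := Module.finrank ℝ V
  let b : Module.Basis (Fin n) ℝ V := Module.finBasis ℝ V
  let bC : Module.Basis (Fin n) ℂ (ℂ ⊗[ℝ] V) := b.baseChange ℂ
  set MA := LinearMap.toMatrix₂ b b A with hMA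
  set MB := LinearMap.toMatrix₂ b b B with hMB
  -- the polynomial matrix
  let P : Matrix (Fin n) (Fin n) (Polynomial ℂ) :=
    fun i j => Polynomial.C (MA i j : ℂ) + Polynomial.X * Polynomial.C (MB i j : ℂ)
  let p : Polynomial ℂ := Matrix.det P
  -- evaluation formula
  have heval : ∀ z : ℂ, p.eval z =
      (Matrix.det (fun i j => (MA i j : ℂ) + z * (MB i j : ℂ))) := by
    intro z
    have h0 : p.eval z = (Polynomial.evalRingHom z) P.det := rfl
    rw [h0, RingHom.map_det]
    congr 1
    ext i j
    change Polynomial.eval z (Polynomial.C (MA i j : ℂ) + Polynomial.X * Polynomial.C (MB i j : ℂ)) = _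
    simp only [P, RingHom.mapMatrix_apply, Matrix.map_apply, Polynomial.coe_evalRingHom,
      Polynomial.eval_add, Polynomial.eval_mul, Polynomial.eval_C, Polynomial.eval_X]
  -- p is nonzero at i
  have hCmat : LinearMap.toMatrix₂ bC bC C = fun i j => (MA i j : ℂ) + Complex.I * (MB i j : ℂ) := by
    ext i j
    rw [LinearMap.toMatrix₂_apply]
    rw [show bC i = 1 ⊗ₜ b i from Module.Basis.baseChange_apply ℂ b i,
        show bC j = 1 ⊗ₜ b j from Module.Basis.baseChange_apply ℂ b j, hC]
    simp [MA, MB, LinearMap.toMatrix₂_apply]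
  have hpI : p.eval Complex.I ≠ 0 := by
    rw [heval, ← hCmat]
    exact ((LinearMap.separatingLeft_iff_det_ne_zero bC).mp
      ((bilinNondegen_iff_separatingLeft C).mp hCnd))
  have hp : p ≠ 0 := fun h => hpI (by simp [h])
  -- roots are finite; pick a real t avoiding them
  have hfin : {x : ℂ | p.IsRoot x}.Finite := Polynomial.finite_setOf_isRoot hp
  have hfin' : {t : ℝ | p.IsRoot (t : ℂ)}.Finite := by
    have := hfin.preimage (f := fun t : ℝ => (t : ℂ)) (Set.injOn_of_injective Complex.ofReal_injective)
    exact this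
  obtain ⟨t, ht⟩ := hfin'.infinite_compl.nonempty
  refine ⟨t, ?_⟩
  have ht' : p.eval (t : ℂ) ≠ 0 := ht
  rw [heval] at ht'
  -- relate to real determinant
  have hmap : (fun i j => ((MA i j : ℂ)) + (t : ℂ) * (MB i j : ℂ)) =
      (MA + t • MB).map (algebraMap ℝ ℂ) := by
    ext i j
    simp [Matrix.map_apply, Matrix.add_apply, Matrix.smul_apply, mul_comm]
  rw [hmap,
    show (MA + t • MB).map (algebraMap ℝ ℂ) = (algebraMap ℝ ℂ : ℝ →+* ℂ).mapMatrix (MA + t • MB)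
      from rfl,
    ← RingHom.map_det] at ht'
  have hdet : (MA + t • MB).det ≠ 0 := by
    intro h
    rw [h] at ht'
    simp at ht'
  rw [bilinNondegen_iff_separatingLeft]
  apply LinearMap.separatingLeft_of_det_ne_zero b
  have : LinearMap.toMatrix₂ b b (A + t • B) = MA + t • MB := by
    simp [MA, MB]
  rw [this]
  exact hdet
end

section
/- Let 𝔥 be a real semisimple Lie algebra and V a finite-dimensional real representation of 𝔥. If the complexified representation V_ℂ of 𝔥_ℂ admits a nondegenerate invariant symmetric complex bilinear form, then V admits a nondegenerate invariant symmetric real bilinear form. -/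
open TensorProduct Polynomial

attribute [local instance 100] LieRing.ofAssociativeRing

section Aux

variable {V : Type*} [AddCommGroup V] [Module ℝ V]

/-- Restriction of a complex bilinear form on `ℂ ⊗ V` to `V` composed with an ℝ-linear
functional `f : ℂ →ₗ[ℝ] ℝ` (e.g. real or imaginary part). -/
noncomputable def realForm (Cb : (ℂ ⊗[ℝ] V) →ₗ[ℂ] (ℂ ⊗[ℝ] V) →ₗ[ℂ] ℂ)
    (f : ℂ →ₗ[ℝ] ℝ) : V →ₗ[ℝ] V →ₗ[ℝ] ℝ :=
  LinearMap.mk₂ ℝ (fun v w => f (Cb ((1 : ℂ) ⊗ₜ v) ((1 : ℂ) ⊗ₜ w)))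
    (by intros m m' w
        simp only [TensorProduct.tmul_add, map_add, LinearMap.add_apply])
    (by intros r m w
        simp only [TensorProduct.tmul_smul, LinearMap.map_smul_of_tower, LinearMap.smul_apply,
          map_smul])
    (by intros m w w'
        simp only [TensorProduct.tmul_add, map_add, LinearMap.add_apply])
    (by intros r m w
        simp only [TensorProduct.tmul_smul, LinearMap.map_smul_of_tower, map_smul])

@[simp] lemma realForm_apply (Cb : (ℂ ⊗[ℝ] V) →ₗ[ℂ] (ℂ ⊗[ℝ] V) →ₗ[ℂ] ℂ)
    (f : ℂ →ₗ[ℝ] ℝ) (v w : V) :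
    realForm Cb f v w = f (Cb ((1 : ℂ) ⊗ₜ v) ((1 : ℂ) ⊗ₜ w)) := rfl

end Aux

/-- Let `𝔥` be a real semisimple Lie algebra and `V` a finite-dimensional real
representation of `𝔥`.  If the complexified representation `V_ℂ` of `𝔥_ℂ` admits a nondegenerate
invariant symmetric complex bilinear form, then `V` admits a nondegenerate invariant symmetric
real bilinear form. -/
theorem orthogonal_of_complex_orthogonal
    (L : Type*) [LieRing L] [LieAlgebra ℝ L] [LieAlgebra.IsSemisimple ℝ L]
    [Module.Finite ℝ L]
    (V : Type*) [AddCommGroup V] [Module ℝ V] [FiniteDimensional ℝ V]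
    (φ : L →ₗ⁅ℝ⁆ Module.End ℝ V)
    (hcplx : ∃ C : (ℂ ⊗[ℝ] V) →ₗ[ℂ] (ℂ ⊗[ℝ] V) →ₗ[ℂ] ℂ,
      (∀ v w : ℂ ⊗[ℝ] V, C v w = C w v) ∧
      (∀ v : ℂ ⊗[ℝ] V, (∀ w, C v w = 0) → v = 0) ∧
      (∀ (X : L) (v w : ℂ ⊗[ℝ] V),
        C ((φ X).baseChange ℂ v) w + C v ((φ X).baseChange ℂ w) = 0)) :
    ∃ B : V →ₗ[ℝ] V →ₗ[ℝ] ℝ,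
      (∀ v w : V, B v w = B w v) ∧
      (∀ v : V, (∀ w, B v w = 0) → v = 0) ∧
      (∀ (X : L) (v w : V), B (φ X v) w + B v (φ X w) = 0) := by
  classical
  obtain ⟨Cb, hsymm, hnd, hinv⟩ := hcplx
  -- bases
  set b : Module.Basis (Fin (Module.finrank ℝ V)) ℝ V := Module.finBasis ℝ V with hb
  set bC := b.baseChange ℂ with hbC
  -- matrix of Cb
  set M : Matrix (Fin (Module.finrank ℝ V)) (Fin (Module.finrank ℝ V)) ℂ :=
    LinearMap.BilinForm.toMatrix bC Cb with hM
  have hdetM : M.det ≠ 0 := by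
    rw [hM, ← LinearMap.BilinForm.nondegenerate_iff_det_ne_zero (B := Cb) bC]
    exact ⟨hnd, fun y hy => hnd y (fun x => by rw [hsymm]; exact hy x)⟩
  -- polynomials
  set pR : ℝ[X] :=
    (Matrix.of fun i j => Polynomial.C ((M i j).re) + X * Polynomial.C ((M i j).im)).det with hpR
  have hmap : pR.map (algebraMap ℝ ℂ) =
      (Matrix.of fun i j =>
        Polynomial.C (((M i j).re : ℂ)) + X * Polynomial.C (((M i j).im : ℂ))).det := by
    rw [hpR, ← Polynomial.coe_mapRingHom, RingHom.map_det]
    congr 1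
    ext i j
    simp [Matrix.map_apply]
  have hevalI : ((pR.map (algebraMap ℝ ℂ)).eval Complex.I) = M.det := by
    rw [hmap, ← Polynomial.coe_evalRingHom, RingHom.map_det]
    congr 1
    ext i j
    simp only [RingHom.mapMatrix_apply, Matrix.map_apply, Matrix.of_apply,
      Polynomial.coe_evalRingHom, eval_add, eval_C, eval_mul, eval_X]
    rw [mul_comm, Complex.re_add_im]
  have hpR0 : pR ≠ 0 := by
    intro h
    rw [h, Polynomial.map_zero, Polynomial.eval_zero] at hevalI
    exact hdetM hevalI.symm
  -- find a real point where pR doesn't vanish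
  obtain ⟨t, ht⟩ : ∃ t : ℝ, pR.eval t ≠ 0 := by
    by_contra h
    push_neg at h
    exact hpR0 (Polynomial.zero_of_eval_zero pR h)
  -- the real bilinear form
  set B : V →ₗ[ℝ] V →ₗ[ℝ] ℝ :=
    realForm Cb Complex.reLm + t • realForm Cb Complex.imLm with hB
  have hBapp : ∀ v w : V,
      B v w = (Cb ((1:ℂ) ⊗ₜ v) ((1:ℂ) ⊗ₜ w)).re + t * (Cb ((1:ℂ) ⊗ₜ v) ((1:ℂ) ⊗ₜ w)).im := by
    intro v w
    rw [hB]
    simp only [LinearMap.add_apply, LinearMap.smul_apply, realForm_apply, smul_eq_mul]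
    rfl
  have hMentry : ∀ i j, M i j = Cb ((1:ℂ) ⊗ₜ b i) ((1:ℂ) ⊗ₜ b j) := by
    intro i j
    rw [hM, LinearMap.BilinForm.toMatrix_apply, hbC, Module.Basis.baseChange_apply, Module.Basis.baseChange_apply]
  -- nondegeneracy of B via determinant
  have hBmat : (LinearMap.BilinForm.toMatrix b B).det = pR.eval t := by
    rw [hpR, ← Polynomial.coe_evalRingHom, RingHom.map_det]
    congr 1
    ext i j
    simp only [RingHom.mapMatrix_apply, Matrix.map_apply, Matrix.of_apply,
      LinearMap.BilinForm.toMatrix_apply, coe_evalRingHom, eval_add, eval_C, eval_mul, eval_X]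
    rw [hBapp, hMentry]
  refine ⟨B, ?_, ?_, ?_⟩
  · intro v w
    rw [hBapp, hBapp, hsymm]
  · have hndB : LinearMap.BilinForm.Nondegenerate B :=
      (LinearMap.BilinForm.nondegenerate_iff_det_ne_zero (B := B) b).mpr (by rw [hBmat]; exact ht)
    exact hndB.1
  · intro X v w
    have h1 : Cb ((1:ℂ) ⊗ₜ (φ X v)) ((1:ℂ) ⊗ₜ w) + Cb ((1:ℂ) ⊗ₜ v) ((1:ℂ) ⊗ₜ (φ X w)) = 0 := by
      have := hinv X ((1:ℂ) ⊗ₜ v) ((1:ℂ) ⊗ₜ w)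
      rwa [LinearMap.baseChange_tmul, LinearMap.baseChange_tmul] at this
    have hre := congrArg Complex.re h1
    have him := congrArg Complex.im h1
    simp only [Complex.add_re, Complex.add_im, Complex.zero_re, Complex.zero_im] at hre him
    rw [hBapp, hBapp]
    linear_combination hre + t * him
end

section
/- Let 𝔥 = 𝔰𝔩(p,ℂ) ⊕ 𝔰𝔩(q,ℂ) with p ≥ q ≥ 1 acting on V = ℂ^p ⊗ ℂ^q by the outer tensor product of the standard representations. Then ρ_𝔥 ≤ 2ρ_V on a Cartan subalgebra of 𝔥 if and only if |p − q| ≤ 1. -/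
open Finset

section Helpers

open MeasureTheory

/-- The step function `t ↦ [a ≤ t]`. -/
noncomputable def rhoStep (a t : ℝ) : ℝ := if a ≤ t then 1 else 0

lemma rhoStep_indicator (a b : ℝ) :
    (fun t => |rhoStep a t - rhoStep b t|) =
      (Set.Ico (min a b) (max a b)).indicator (fun _ => (1:ℝ)) := by
  funext t
  by_cases ha : a ≤ t <;> by_cases hb : b ≤ t <;>
    simp [rhoStep, ha, hb, Set.indicator, Set.mem_Ico, min_le_iff, lt_max_iff, abs_of_nonneg,
      lt_of_not_ge, not_lt_of_ge, le_of_lt]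

lemma rhoStep_integrable (a b : ℝ) : Integrable (fun t => |rhoStep a t - rhoStep b t|) := by
  rw [rhoStep_indicator]
  refine (integrable_indicator_iff measurableSet_Ico).2 ?_
  refine integrableOn_const ?_
  rw [Real.volume_Ico]
  exact ENNReal.ofReal_ne_top

lemma rhoStep_integral (a b : ℝ) : ∫ t, |rhoStep a t - rhoStep b t| = |a - b| := by
  rw [rhoStep_indicator]
  have h1 : (fun _ : ℝ => (1:ℝ)) = (1 : ℝ → ℝ) := rfl
  rw [h1, integral_indicator_one measurableSet_Ico, Real.volume_real_Ico_of_le min_le_max,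
    max_sub_min_eq_abs, abs_sub_comm]

lemma rhoStep_abs (a b t : ℝ) :
    |rhoStep a t - rhoStep b t| = rhoStep a t + rhoStep b t - 2 * rhoStep a t * rhoStep b t := by
  unfold rhoStep; split_ifs <;> norm_num

lemma rho_sum_sum_integrable {ι κ : Type*} [Fintype ι] [Fintype κ] (a : ι → ℝ) (b : κ → ℝ) :
    Integrable (fun t => ∑ i, ∑ j, |rhoStep (a i) t - rhoStep (b j) t|) := by
  refine integrable_finset_sum _ fun i _ => integrable_finset_sum _ fun j _ => ?_
  exact rhoStep_integrable _ _

lemma rho_sum_sum_integral {ι κ : Type*} [Fintype ι] [Fintype κ] (a : ι → ℝ) (b : κ → ℝ) :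
    ∫ t, ∑ i, ∑ j, |rhoStep (a i) t - rhoStep (b j) t| = ∑ i, ∑ j, |a i - b j| := by
  rw [integral_finset_sum _ fun i _ => integrable_finset_sum _ fun j _ => rhoStep_integrable _ _]
  refine Finset.sum_congr rfl fun i _ => ?_
  rw [integral_finset_sum _ fun j _ => rhoStep_integrable _ _]
  exact Finset.sum_congr rfl fun j _ => rhoStep_integral _ _

lemma rho_int_key (d e : ℤ) (h0 : 0 ≤ e) (h1 : e ≤ 1) : 0 ≤ d * (d - e) := by
  interval_cases e
  · simpa using mul_self_nonneg d
  · rcases le_or_gt d 0 with h | h <;> nlinarith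

lemma rhoStep_double_sum {ι κ : Type*} [Fintype ι] [Fintype κ] (a : ι → ℝ) (b : κ → ℝ) (t : ℝ) :
    ∑ i, ∑ j, |rhoStep (a i) t - rhoStep (b j) t| =
      (Fintype.card κ : ℝ) * ∑ i, rhoStep (a i) t + (Fintype.card ι : ℝ) * ∑ j, rhoStep (b j) t
        - 2 * (∑ i, rhoStep (a i) t) * (∑ j, rhoStep (b j) t) := by
  simp only [rhoStep_abs, Finset.sum_sub_distrib, Finset.sum_add_distrib, Finset.sum_const,
    Finset.card_univ, nsmul_eq_mul, ← Finset.mul_sum, ← Finset.sum_mul]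

/-- The main inequality: if `q ≤ p ≤ q + 1`, then for any real tuples `x`, `y`,
`∑_{i,i'} |x_i - x_{i'}| + ∑_{j,j'} |y_j - y_{j'}| ≤ 2 ∑_{i,j} |x_i + y_j|`. -/
lemma rho_key (p q : ℕ) (hqp : q ≤ p) (hp : p ≤ q + 1) (x : Fin p → ℝ) (y : Fin q → ℝ) :
    (∑ i, ∑ i', |x i - x i'|) + (∑ j, ∑ j', |y j - y j'|) ≤ 2 * ∑ i, ∑ j, |x i + y j| := by
  set z : Fin q → ℝ := fun j => -(y j) with hz
  have hyz : ∀ j j', |y j - y j'| = |z j - z j'| := by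
    intro j j'
    rw [show z j - z j' = y j' - y j by simp [hz]; ring, abs_sub_comm]
  have hxz : ∀ i j, |x i + y j| = |x i - z j| := by
    intro i j; simp [hz, sub_neg_eq_add]
  simp only [hyz, hxz]
  rw [← rho_sum_sum_integral x x, ← rho_sum_sum_integral z z, ← rho_sum_sum_integral x z,
    ← integral_add (rho_sum_sum_integrable x x) (rho_sum_sum_integrable z z),
    ← integral_const_mul]
  refine integral_mono ((rho_sum_sum_integrable x x).add (rho_sum_sum_integrable z z))
    ((rho_sum_sum_integrable x z).const_mul 2) ?_
  intro t
  simp only [rhoStep_double_sum, Fintype.card_fin]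
  have hS : ∑ i, rhoStep (x i) t = ((Finset.univ.filter fun i => x i ≤ t).card : ℝ) := by
    simp [rhoStep, Finset.sum_boole]
  have hT : ∑ j, rhoStep (z j) t = ((Finset.univ.filter fun j => z j ≤ t).card : ℝ) := by
    simp [rhoStep, Finset.sum_boole]
  set m := (Finset.univ.filter fun i => x i ≤ t).card with hm
  set n := (Finset.univ.filter fun j => z j ≤ t).card with hn
  have hmp : m ≤ p := (Finset.card_filter_le _ _).trans (by simp)
  have hnq : n ≤ q := (Finset.card_filter_le _ _).trans (by simp)
  have hint : (0:ℝ) ≤ ((m:ℝ) - n) * (((m:ℝ) - n) - ((p:ℝ) - q)) := by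
    have h := rho_int_key ((m:ℤ) - n) ((p:ℤ) - q) (by omega) (by omega)
    have h2 : ((((m:ℤ) - n) * (((m:ℤ) - n) - ((p:ℤ) - q)) : ℤ) : ℝ) ≥ 0 := by exact_mod_cast h
    push_cast at h2
    linarith
  rw [hS, hT]
  nlinarith [hint]

/-- Summing over ordered pairs of a symmetric function with vanishing diagonal
gives half the full double sum. -/
lemma rho_half_pairs {n : ℕ} (g : Fin n → Fin n → ℝ) (hsym : ∀ i j, g i j = g j i)
    (hdiag : ∀ i, g i i = 0) :
    ∑ i, ∑ j, (if i < j then g i j else 0) = (1/2) * ∑ i, ∑ j, g i j := by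
  have h : ∑ i, ∑ j, g i j
      = ∑ i, ∑ j, ((if i < j then g i j else 0) + (if j < i then g i j else 0)) := by
    refine Finset.sum_congr rfl fun i _ => Finset.sum_congr rfl fun j _ => ?_
    rcases lt_trichotomy i j with h|h|h
    · simp [h, not_lt_of_gt h]
    · simp [h, hdiag]
    · simp [h, not_lt_of_gt h]
  have h2 : ∑ i, ∑ j, (if j < i then g i j else 0)
      = ∑ i, ∑ j, (if i < j then g i j else 0) := by
    rw [Finset.sum_comm]
    exact Finset.sum_congr rfl fun i _ => Finset.sum_congr rfl fun j _ => by rw [hsym]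
  rw [h]
  simp only [Finset.sum_add_distrib]
  rw [h2]; ring

/-- Counterexample direction: if `p ≥ q + 2`, the inequality fails. -/
lemma rho_forward (p q : ℕ) (hq : 1 ≤ q) (hqp : q ≤ p) (hpq : q + 2 ≤ p)
    (h : ∀ (x : Fin p → ℝ) (y : Fin q → ℝ), (∑ i, x i) = 0 → (∑ j, y j) = 0 →
      ((∑ i : Fin p, ∑ i' : Fin p, if i < i' then |x i - x i'| else 0) +
        ∑ j : Fin q, ∑ j' : Fin q, if j < j' then |y j - y j'| else 0) ≤
      2 * ((1 / 2) * ∑ i : Fin p, ∑ j : Fin q, |x i + y j|)) : False := by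
  set x : Fin p → ℝ := fun i => if (i:ℕ) = 0 then 1 else if (i:ℕ) = p - 1 then -1 else 0 with hxdef
  have hsingle : ∀ (k : ℕ) (hk : k < p) (c : ℝ),
      ∑ i : Fin p, (if (i:ℕ) = k then c else 0) = c := by
    intro k hk c
    rw [Finset.sum_eq_single (⟨k, hk⟩ : Fin p)]
    · simp
    · intro b _ hb
      have : (b:ℕ) ≠ k := fun hc => hb (Fin.ext hc)
      simp [this]
    · simp
  have hsplit : ∀ i : Fin p, x i =
      (if (i:ℕ) = 0 then (1:ℝ) else 0) + (if (i:ℕ) = p - 1 then -1 else 0) := by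
    intro i
    simp only [hxdef]
    split_ifs <;> first | (exfalso; omega) | norm_num
  have habs_split : ∀ i : Fin p, |x i| =
      (if (i:ℕ) = 0 then (1:ℝ) else 0) + (if (i:ℕ) = p - 1 then 1 else 0) := by
    intro i
    simp only [hxdef]
    split_ifs <;> first | (exfalso; omega) | norm_num
  have hx : ∑ i, x i = 0 := by
    simp only [hsplit, Finset.sum_add_distrib, hsingle 0 (by omega), hsingle (p-1) (by omega)]
    norm_num
  have hA : ∑ i, |x i| = 2 := by
    simp only [habs_split, Finset.sum_add_distrib, hsingle 0 (by omega), hsingle (p-1) (by omega)]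
    norm_num
  have habs : ∀ i j : Fin p, |x i - x j| = |x i| + |x j| - (if i = j then 2 * |x i| else 0) := by
    intro i j
    by_cases hij : i = j
    · simp [hij]; ring
    · simp only [if_neg hij, hxdef]
      split_ifs <;> first | (exact absurd (Fin.ext (by omega)) hij) | norm_num
  have hd : ∀ i, ∑ j : Fin p, (if i = j then 2 * |x i| else 0) = 2 * |x i| := by
    intro i
    rw [Finset.sum_ite_eq univ i (fun _ => 2 * |x i|)]
    simp
  have hdouble : ∑ i : Fin p, ∑ j : Fin p, |x i - x j| = 4 * (p:ℝ) - 4 := by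
    have hrow : ∀ i : Fin p, ∑ j : Fin p, |x i - x j| = (p:ℝ) * |x i| + 2 - 2 * |x i| := by
      intro i
      simp only [habs i, Finset.sum_sub_distrib, Finset.sum_add_distrib, Finset.sum_const,
        Finset.card_univ, Fintype.card_fin, nsmul_eq_mul, hA, hd i]
    simp only [hrow]
    simp only [Finset.sum_sub_distrib, Finset.sum_add_distrib, Finset.sum_const,
      Finset.card_univ, Fintype.card_fin, nsmul_eq_mul, ← Finset.mul_sum, hA]
    ring
  have hpair : ∑ i : Fin p, ∑ i' : Fin p, (if i < i' then |x i - x i'| else 0)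
      = 2 * (p:ℝ) - 2 := by
    rw [rho_half_pairs (fun i j => |x i - x j|) (fun i j => abs_sub_comm _ _) (fun i => by simp)]
    rw [hdouble]; ring
  have hrhs : ∑ i : Fin p, ∑ _j : Fin q, |x i + (0:ℝ)| = 2 * (q:ℝ) := by
    simp only [add_zero, Finset.sum_const, Finset.card_univ, Fintype.card_fin, nsmul_eq_mul,
      ← Finset.mul_sum]
    rw [hA]; ring
  have hcon := h x (fun _ => 0) hx (by simp)
  rw [hpair, hrhs] at hcon
  simp only [sub_zero, abs_zero] at hcon
  have h0 : (∑ j : Fin q, ∑ j' : Fin q, if j < j' then (0:ℝ) else 0) = 0 := by simp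
  rw [h0] at hcon
  have hple : (p:ℝ) ≤ (q:ℝ) + 1 := by linarith
  have : p ≤ q + 1 := by exact_mod_cast hple
  omega

end Helpers

/-- Let `𝔥 = 𝔰𝔩(p,ℂ) ⊕ 𝔰𝔩(q,ℂ)` with `p ≥ q ≥ 1` act on `V = ℂ^p ⊗ ℂ^q` by
the outer tensor product of the standard representations.  In terms of real diagonal Cartan
elements, `ρ_𝔥 ≤ 2ρ_V` holds if and only if `|p − q| ≤ 1`. -/
theorem slp_slq_tensor_rho_iff (p q : ℕ) (hq : 1 ≤ q) (hqp : q ≤ p) :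
    (∀ (x : Fin p → ℝ) (y : Fin q → ℝ), (∑ i, x i) = 0 → (∑ j, y j) = 0 →
      ((∑ i : Fin p, ∑ i' : Fin p, if i < i' then |x i - x i'| else 0) +
        ∑ j : Fin q, ∑ j' : Fin q, if j < j' then |y j - y j'| else 0) ≤
      2 * ((1 / 2) * ∑ i : Fin p, ∑ j : Fin q, |x i + y j|)) ↔
    p ≤ q + 1 := by
  constructor
  · intro h
    by_contra hple
    exact rho_forward p q hq hqp (by omega) h
  · intro hp x y _hx _hy
    have h1 := rho_half_pairs (fun i j => |x i - x j|) (fun i j => abs_sub_comm _ _)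
      (fun i => by simp)
    have h2 := rho_half_pairs (fun j j' => |y j - y j'|) (fun i j => abs_sub_comm _ _)
      (fun i => by simp)
    have hk := rho_key p q hqp hp x y
    linarith [h1, h2, hk]
end

section
/- Let 𝔥 = 𝔰𝔬(p,ℂ) ⊕ 𝔰𝔬(q,ℂ) with p ≥ q ≥ 1 acting on V = ℂ^p ⊗ ℂ^q. Then ρ_𝔥 ≤ ρ_V on a Cartan subspace if and only if p − q ≤ 2. -/
open Finset


open Finset


private lemma two_max_abs (x y : ℝ) : |x + y| + |x - y| = 2 * max |x| |y| := by
  rcases max_cases |x| |y| with ⟨h1, h2⟩ | ⟨h1, h2⟩ <;>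
  rcases abs_cases x with ⟨hx1, hx2⟩ | ⟨hx1, hx2⟩ <;>
  rcases abs_cases y with ⟨hy1, hy2⟩ | ⟨hy1, hy2⟩ <;>
  rcases abs_cases (x + y) with ⟨ha1, ha2⟩ | ⟨ha1, ha2⟩ <;>
  rcases abs_cases (x - y) with ⟨hb1, hb2⟩ | ⟨hb1, hb2⟩ <;>
  linarith

private def pairSum : List ℝ → ℝ
  | [] => 0
  | a :: l => (l.map (fun b => 2 * max a b)).sum + pairSum l

private def crossSum (l1 l2 : List ℝ) : ℝ :=
  (l1.map (fun a => (l2.map (fun b => 2 * max a b)).sum)).sum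

private lemma pairSum_perm : ∀ {l l' : List ℝ}, l.Perm l' → pairSum l = pairSum l' := by
  intro l l' h
  induction h with
  | nil => rfl
  | cons a h ih =>
      simp only [pairSum, ih, (h.map _).sum_eq]
  | swap a b l =>
      simp only [pairSum, List.map_cons, List.sum_cons]
      rw [max_comm b a]; ring
  | trans h1 h2 ih1 ih2 => rw [ih1, ih2]

private lemma crossSum_perm_left {l1 l1' : List ℝ} (h : l1.Perm l1') (l2 : List ℝ) :
    crossSum l1 l2 = crossSum l1' l2 := (h.map _).sum_eq

private lemma crossSum_cons (a : ℝ) (l1 l2 : List ℝ) :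
    crossSum (a :: l1) l2 = (l2.map (fun b => 2 * max a b)).sum + crossSum l1 l2 := by
  simp [crossSum]

private lemma crossSum_cons_right (b : ℝ) : ∀ (l1 l2 : List ℝ),
    crossSum l1 (b :: l2) = (l1.map (fun a => 2 * max a b)).sum + crossSum l1 l2 := by
  intro l1 l2
  induction l1 with
  | nil => simp [crossSum]
  | cons c l ih =>
      simp only [crossSum_cons, List.map_cons, List.sum_cons] at *
      rw [ih]; ring

private lemma exists_max_perm : ∀ (l : List ℝ), l ≠ [] →
    ∃ a l', l.Perm (a :: l') ∧ ∀ b ∈ l', b ≤ a := by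
  intro l
  induction l with
  | nil => simp
  | cons c l ih =>
      intro _
      rcases eq_or_ne l [] with rfl | hl
      · exact ⟨c, [], List.Perm.refl _, by simp⟩
      · obtain ⟨a, l', hp, hb⟩ := ih hl
        rcases le_total c a with h | h
        · refine ⟨a, c :: l', (hp.cons c).trans (List.Perm.swap a c l'), ?_⟩
          intro b hb'
          rcases List.mem_cons.1 hb' with rfl | hb'
          · exact h
          · exact hb b hb'
        · refine ⟨c, l, List.Perm.refl _, ?_⟩
          intro b hb'
          have : b ∈ a :: l' := hp.mem_iff.1 hb'
          rcases List.mem_cons.1 this with rfl | hmem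
          · exact h
          · exact le_trans (hb b hmem) h

private lemma main_ineq (ε1 ε2 : ℕ) (hε1 : ε1 ≤ 1) (hε2 : ε2 ≤ 1) : ∀ (n : ℕ) (l1 l2 : List ℝ),
    l1.length + l2.length = n → (∀ a ∈ l1, 0 ≤ a) → (∀ b ∈ l2, 0 ≤ b) →
    2 * l1.length + ε1 ≤ 2 * l2.length + ε2 + 2 →
    2 * l2.length + ε2 ≤ 2 * l1.length + ε1 + 2 →
    pairSum l1 + ε1 * l1.sum + pairSum l2 + ε2 * l2.sum ≤
      crossSum l1 l2 + ε2 * l1.sum + ε1 * l2.sum := by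
  intro n
  induction n with
  | zero =>
      intro l1 l2 hn _ _ _ _
      have h1 : l1 = [] := List.length_eq_zero_iff.1 (by omega)
      have h2 : l2 = [] := List.length_eq_zero_iff.1 (by omega)
      subst h1; subst h2
      simp [pairSum, crossSum]
  | succ n ih =>
      intro l1 l2 hn hpos1 hpos2 hc1 hc2
      by_cases hside : 2 * l2.length + ε2 ≤ 2 * l1.length + ε1
      · -- remove max from l1
        have hl1 : l1 ≠ [] := by
          intro h; subst h
          simp only [List.length_nil] at hside hn
          omega
        obtain ⟨a, l', hp, hmax⟩ := exists_max_perm l1 hl1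
        have hamem : a ∈ l1 := hp.mem_iff.2 List.mem_cons_self
        have ha : 0 ≤ a := hpos1 a hamem
        have hlen : l1.length = l'.length + 1 := by rw [hp.length_eq]; simp
        have hpos' : ∀ b ∈ l', 0 ≤ b := fun b hb =>
          hpos1 b (hp.mem_iff.2 (List.mem_cons_of_mem a hb))
        have hih := ih l' l2 (by omega) hpos' hpos2 (by omega) (by omega)
        rw [pairSum_perm hp, crossSum_perm_left hp, hp.sum_eq]
        simp only [pairSum, crossSum_cons, List.sum_cons]
        -- pair part of a with l' equals 2 * l'.length * a
        have e1 : (l'.map (fun b => 2 * max a b)).sum = 2 * l'.length * a := by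
          rw [List.map_congr_left (f := fun b => 2 * max a b) (g := fun _ => 2 * a)
            (by intro b hb; simp [max_eq_left (hmax b hb)])]
          simp [List.map_const', mul_comm, nsmul_eq_mul]
          ring
        have e2 : 2 * (l2.length : ℝ) * a ≤ (l2.map (fun b => 2 * max a b)).sum := by
          have : ((l2.map (fun _ => 2 * a)).sum : ℝ) ≤ (l2.map (fun b => 2 * max a b)).sum :=
            List.sum_le_sum (fun b hb => by
              have : a ≤ max a b := le_max_left a b
              linarith)
          simpa [List.map_const', nsmul_eq_mul, mul_comm, mul_assoc, mul_left_comm] using this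
        have key : (2 * (l'.length : ℝ) + ε1) * a ≤ (2 * l2.length + ε2) * a := by
          apply mul_le_mul_of_nonneg_right _ ha
          have : 2 * l'.length + ε1 ≤ 2 * l2.length + ε2 := by omega
          exact_mod_cast this
        rw [e1]
        nlinarith [hih, e2]
      · -- remove max from l2
        push_neg at hside
        have hl2 : l2 ≠ [] := by
          intro h; subst h
          simp only [List.length_nil] at hside
          omega
        obtain ⟨a, l', hp, hmax⟩ := exists_max_perm l2 hl2
        have hamem : a ∈ l2 := hp.mem_iff.2 List.mem_cons_self
        have ha : 0 ≤ a := hpos2 a hamem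
        have hlen : l2.length = l'.length + 1 := by rw [hp.length_eq]; simp
        have hpos' : ∀ b ∈ l', 0 ≤ b := fun b hb =>
          hpos2 b (hp.mem_iff.2 (List.mem_cons_of_mem a hb))
        have hih := ih l1 l' (by omega) hpos1 hpos' (by omega) (by omega)
        have hcross : crossSum l1 l2 = crossSum l1 (a :: l') := by
          unfold crossSum
          refine congrArg _ (List.map_congr_left ?_)
          intro c _
          exact (hp.map _).sum_eq
        rw [hcross, hp.sum_eq]
        rw [crossSum_cons_right, pairSum_perm hp]
        simp only [pairSum, List.sum_cons]
        have e1 : (l'.map (fun b => 2 * max a b)).sum = 2 * l'.length * a := by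
          rw [List.map_congr_left (f := fun b => 2 * max a b) (g := fun _ => 2 * a)
            (by intro b hb; simp [max_eq_left (hmax b hb)])]
          simp [List.map_const', mul_comm, nsmul_eq_mul]
          ring
        have e2 : 2 * (l1.length : ℝ) * a ≤ (l1.map (fun c => 2 * max c a)).sum := by
          have : ((l1.map (fun _ => 2 * a)).sum : ℝ) ≤ (l1.map (fun c => 2 * max c a)).sum :=
            List.sum_le_sum (fun c hc => by
              have : a ≤ max c a := le_max_right c a
              linarith)
          simpa [List.map_const', nsmul_eq_mul, mul_comm, mul_assoc, mul_left_comm] using this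
        have key : (2 * (l'.length : ℝ) + ε2) * a ≤ (2 * l1.length + ε1) * a := by
          apply mul_le_mul_of_nonneg_right _ ha
          have : 2 * l'.length + ε2 ≤ 2 * l1.length + ε1 := by omega
          exact_mod_cast this
        rw [e1]
        nlinarith [hih, e2]

private lemma pairSum_ofFn : ∀ (n : ℕ) (f : Fin n → ℝ),
    (∑ i : Fin n, ∑ i' : Fin n, if i < i' then 2 * max (f i) (f i') else 0) =
      pairSum (List.ofFn f) := by
  intro n
  induction n with
  | zero => simp [pairSum]
  | succ n ih =>
      intro f
      rw [List.ofFn_succ]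
      simp only [pairSum, List.map_ofFn, List.sum_ofFn]
      rw [Fin.sum_univ_succ]
      congr 1
      · rw [Fin.sum_univ_succ]
        simp [Fin.succ_pos]
      · rw [← ih (fun i => f i.succ)]
        refine Finset.sum_congr rfl ?_
        intro i _
        rw [Fin.sum_univ_succ]
        have h0 : ¬ (i.succ < (0 : Fin (n+1))) := by
          simp [Fin.lt_def]
        simp only [h0, if_false, zero_add]
        refine Finset.sum_congr rfl ?_
        intro j _
        simp [Fin.succ_lt_succ_iff]

private lemma crossSum_ofFn (n m : ℕ) (f : Fin n → ℝ) (g : Fin m → ℝ) :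
    (∑ i : Fin n, ∑ j : Fin m, 2 * max (f i) (g j)) = crossSum (List.ofFn f) (List.ofFn g) := by
  simp [crossSum, List.map_ofFn, List.sum_ofFn, Function.comp]


/-- Let `𝔥 = 𝔰𝔬(p,ℂ) ⊕ 𝔰𝔬(q,ℂ)` with `p ≥ q ≥ 1` act on `V = ℂ^p ⊗ ℂ^q`.
In terms of Cartan subspaces (with `ℓ = ⌊p/2⌋`, `m = ⌊q/2⌋`, `ε_p = p − 2ℓ`, `ε_q = q − 2m`),
`ρ_𝔥 ≤ ρ_V` holds if and only if `p − q ≤ 2`. -/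
theorem sop_soq_tensor_rho_iff (p q : ℕ) (hq : 1 ≤ q) (hqp : q ≤ p)
    (ℓ m : ℕ) (hℓ : ℓ = p / 2) (hm : m = q / 2)
    (εp εq : ℕ) (hεp : εp = p - 2 * ℓ) (hεq : εq = q - 2 * m) :
    (∀ (x : Fin ℓ → ℝ) (y : Fin m → ℝ),
      ((∑ i : Fin ℓ, ∑ i' : Fin ℓ, if i < i' then |x i - x i'| + |x i + x i'| else 0) +
          (εp : ℝ) * ∑ i : Fin ℓ, |x i| +
        (∑ j : Fin m, ∑ j' : Fin m, if j < j' then |y j - y j'| + |y j + y j'| else 0) +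
          (εq : ℝ) * ∑ j : Fin m, |y j|) ≤
      ((∑ i : Fin ℓ, ∑ j : Fin m, (|x i + y j| + |x i - y j|)) +
        (εq : ℝ) * ∑ i : Fin ℓ, |x i| + (εp : ℝ) * ∑ j : Fin m, |y j|)) ↔
    p ≤ q + 2 := by
  have hp2 : 2 * ℓ + εp = p := by omega
  have hq2 : 2 * m + εq = q := by omega
  have hεp1 : εp ≤ 1 := by omega
  have hεq1 : εq ≤ 1 := by omega
  constructor
  · -- forward direction
    intro H
    rcases Nat.eq_zero_or_pos ℓ with hℓ0 | hℓ0
    · omega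
    · haveI : NeZero ℓ := ⟨by omega⟩
      set x : Fin ℓ → ℝ := fun i => if i = 0 then 1 else 0 with hx
      have hSx : (∑ i : Fin ℓ, |x i|) = 1 := by
        simp [hx, apply_ite abs, Finset.sum_ite_eq']
      have hA : (∑ i : Fin ℓ, ∑ i' : Fin ℓ, if i < i' then |x i - x i'| + |x i + x i'| else 0)
          = 2 * (ℓ : ℝ) - 2 := by
        rw [Finset.sum_eq_single_of_mem (0 : Fin ℓ) (Finset.mem_univ _)]
        · have : ∀ i' : Fin ℓ, (if (0 : Fin ℓ) < i' then |x 0 - x i'| + |x 0 + x i'| else 0)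
              = 2 - (if i' = 0 then 2 else 0) := by
            intro i'
            by_cases h0 : i' = 0
            · simp [h0]
            · have hpos : (0 : Fin ℓ) < i' := by
                simp only [Fin.ext_iff, Fin.lt_def, Fin.val_zero] at h0 ⊢
                omega
              simp only [hpos, h0, hx, if_true, if_false, sub_zero, add_zero, abs_one]
              norm_num
          rw [Finset.sum_congr rfl (fun i' _ => this i')]
          rw [Finset.sum_sub_distrib]
          simp only [Finset.sum_const, Finset.card_univ, Fintype.card_fin, nsmul_eq_mul,
            Finset.sum_ite_eq', Finset.mem_univ, if_true]
          ring
        · intro i _ hi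
          apply Finset.sum_eq_zero
          intro i' _
          by_cases hii : i < i'
          · have hi' : i' ≠ 0 := by
              intro h; subst h; exact absurd hii (by simp [Fin.lt_def])
            simp [hii, hx, hi, hi']
          · simp [hii]
      have := H x 0
      rw [hA, hSx] at this
      simp only [Pi.zero_apply, abs_zero, add_zero, sub_zero, Finset.sum_const_zero,
        mul_zero, mul_one, ite_self] at this
      have hcross : (∑ i : Fin ℓ, ∑ _j : Fin m, (|x i| + |x i|)) = 2 * (m : ℝ) := by
        have : ∀ i : Fin ℓ, (∑ _j : Fin m, (|x i| + |x i|)) = (m : ℝ) * (2 * |x i|) := by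
          intro i
          rw [Finset.sum_const]
          simp [nsmul_eq_mul]; ring
        rw [Finset.sum_congr rfl (fun i _ => this i), ← Finset.mul_sum, ← Finset.mul_sum, hSx]
        ring
      rw [hcross] at this
      have : (2 * (ℓ : ℝ) + εp) ≤ 2 * (m : ℝ) + εq + 2 := by linarith
      have h2 : 2 * ℓ + εp ≤ 2 * m + εq + 2 := by exact_mod_cast this
      omega
  · -- backward direction
    intro hpq x y
    have e1 : (∑ i : Fin ℓ, ∑ i' : Fin ℓ, if i < i' then |x i - x i'| + |x i + x i'| else 0)
        = pairSum (List.ofFn (fun i => |x i|)) := by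
      rw [← pairSum_ofFn]
      refine Finset.sum_congr rfl fun i _ => Finset.sum_congr rfl fun i' _ => ?_
      by_cases h : i < i'
      · simp only [h, if_true]
        rw [add_comm, two_max_abs]
      · simp [h]
    have e2 : (∑ j : Fin m, ∑ j' : Fin m, if j < j' then |y j - y j'| + |y j + y j'| else 0)
        = pairSum (List.ofFn (fun j => |y j|)) := by
      rw [← pairSum_ofFn]
      refine Finset.sum_congr rfl fun j _ => Finset.sum_congr rfl fun j' _ => ?_
      by_cases h : j < j'
      · simp only [h, if_true]
        rw [add_comm, two_max_abs]
      · simp [h]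
    have e3 : (∑ i : Fin ℓ, ∑ j : Fin m, (|x i + y j| + |x i - y j|))
        = crossSum (List.ofFn (fun i => |x i|)) (List.ofFn (fun j => |y j|)) := by
      rw [← crossSum_ofFn]
      refine Finset.sum_congr rfl fun i _ => Finset.sum_congr rfl fun j _ => ?_
      rw [two_max_abs]
    have e4 : (∑ i : Fin ℓ, |x i|) = (List.ofFn (fun i => |x i|)).sum := by
      rw [List.sum_ofFn]
    have e5 : (∑ j : Fin m, |y j|) = (List.ofFn (fun j => |y j|)).sum := by
      rw [List.sum_ofFn]
    rw [e1, e2, e3, e4, e5]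
    apply main_ineq εp εq hεp1 hεq1 ((List.ofFn (fun i => |x i|)).length +
      (List.ofFn (fun j => |y j|)).length) _ _ rfl
    · intro a ha
      obtain ⟨i, rfl⟩ := List.mem_ofFn.1 ha
      exact abs_nonneg _
    · intro b hb
      obtain ⟨j, rfl⟩ := List.mem_ofFn.1 hb
      exact abs_nonneg _
    · simp only [List.length_ofFn]; omega
    · simp only [List.length_ofFn]; omega
end

section
/- Let 𝔥 = 𝔰𝔭(p,ℂ) ⊕ 𝔰𝔭(q,ℂ) with p ≥ q ≥ 1 acting on V = ℂ^{2p} ⊗ ℂ^{2q}. Then ρ_𝔥 ≰ ρ_V; that is, there exists X in a Cartan subspace of 𝔥 with ρ_𝔥(X) > ρ_V(X). -/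
open Finset

lemma aux_pairsum (n : ℕ) (c : ℝ) :
    2 * (∑ i : Fin n, ∑ i' : Fin n, (if i < i' then c else 0)) = c * n * n - c * n := by
  have hsymm : (∑ i : Fin n, ∑ i' : Fin n, (if i' < i then c else 0))
      = ∑ i : Fin n, ∑ i' : Fin n, (if i < i' then c else 0) := Finset.sum_comm
  have h2 : (∑ i : Fin n, ∑ i' : Fin n, (if i < i' then c else 0))
      + (∑ i : Fin n, ∑ i' : Fin n, (if i' < i then c else 0))
      = ∑ i : Fin n, ∑ i' : Fin n, (c - if i = i' then c else 0) := by
    rw [← Finset.sum_add_distrib]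
    refine Finset.sum_congr rfl fun i _ => ?_
    rw [← Finset.sum_add_distrib]
    refine Finset.sum_congr rfl fun i' _ => ?_
    rcases lt_trichotomy i i' with h | h | h
    · simp [h, not_lt.mpr h.le, h.ne]
    · simp [h]
    · simp [h, not_lt.mpr h.le, h.ne']
  have h3 : ∑ i : Fin n, ∑ i' : Fin n, (c - if i = i' then c else 0) = c * n * n - c * n := by
    simp [Finset.sum_sub_distrib, Finset.sum_ite_eq, mul_comm]
  rw [two_mul]
  nth_rewrite 2 [← hsymm]
  rw [h2, h3]

/-- Let `𝔥 = 𝔰𝔭(p,ℂ) ⊕ 𝔰𝔭(q,ℂ)` with `p ≥ q ≥ 1` act on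
`V = ℂ^{2p} ⊗ ℂ^{2q}`.  Then `ρ_𝔥 ≰ ρ_V`: there is an element `(x, y)` of a Cartan subspace
with `ρ_𝔥(x,y) > ρ_V(x,y)`. -/
theorem spp_spq_tensor_not_rho_le (p q : ℕ) (hq : 1 ≤ q) (hqp : q ≤ p) :
    ∃ (x : Fin p → ℝ) (y : Fin q → ℝ),
      (1 / 2) * (∑ i : Fin p, ∑ j : Fin q,
          (|x i + y j| + |x i - y j| + |-x i + y j| + |-x i - y j|)) <
      ((∑ i : Fin p, ∑ i' : Fin p, if i < i' then |x i - x i'| + |x i + x i'| else 0) +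
          2 * ∑ i : Fin p, |x i| +
        (∑ j : Fin q, ∑ j' : Fin q, if j < j' then |y j - y j'| + |y j + y j'| else 0) +
          2 * ∑ j : Fin q, |y j|) := by
  refine ⟨fun _ => 1, fun _ => 1, ?_⟩
  have hP := aux_pairsum p (2 : ℝ)
  have hQ := aux_pairsum q (2 : ℝ)
  have hp : (1:ℝ) ≤ p := by exact_mod_cast hq.trans hqp
  have hq' : (1:ℝ) ≤ q := by exact_mod_cast hq
  norm_num [Finset.sum_const, Finset.card_univ] at hP hQ ⊢
  nlinarith [sq_nonneg ((p:ℝ) - q)]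
end

section
/- Let V be the standard representation ℂ^{2ℓ} of 𝔰𝔭(ℓ,ℂ) with ℓ ≥ 1. Then p_V = 2ℓ, i.e., ρ_𝔥(X) ≤ 2ℓ·ρ_V(X) for all X in the Cartan subspace, and this constant is optimal. -/
open Finset

lemma pair_sum_aux {n : ℕ} (a : Fin n → ℝ) :
    ∑ i : Fin n, ∑ j : Fin n, (if i < j then a i + a j else 0)
      = ((n : ℝ) - 1) * ∑ i : Fin n, a i := by
  have h1 : ∀ i j : Fin n, (if i < j then a i + a j else 0)
      = (if i < j then a i else 0) + (if i < j then a j else 0) := by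
    intro i j; split <;> simp
  have h2 : ∑ i : Fin n, ∑ j : Fin n, (if i < j then a j else 0)
      = ∑ i : Fin n, ∑ j : Fin n, (if j < i then a i else 0) := by
    rw [Finset.sum_comm]
  have h3 : ∀ i : Fin n, ∑ j : Fin n,
      ((if i < j then a i else 0) + (if j < i then a i else 0))
      = ((n : ℝ) - 1) * a i := by
    intro i
    have : ∀ j : Fin n, (if i < j then a i else 0) + (if j < i then a i else 0)
        = a i - (if i = j then a i else 0) := by
      intro j
      rcases lt_trichotomy i j with h | h | h
      · simp [h, not_lt.mpr h.le, h.ne]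
      · simp [h]
      · simp [h, not_lt.mpr h.le, h.ne']
    rw [Finset.sum_congr rfl fun j _ => this j, Finset.sum_sub_distrib,
      Finset.sum_ite_eq Finset.univ i (fun _ => a i)]
    simp [Finset.card_univ]
    ring
  calc ∑ i : Fin n, ∑ j : Fin n, (if i < j then a i + a j else 0)
      = ∑ i : Fin n, ∑ j : Fin n,
          ((if i < j then a i else 0) + (if j < i then a i else 0)) := by
        simp only [h1, Finset.sum_add_distrib]
        rw [h2]
    _ = ∑ i : Fin n, ((n : ℝ) - 1) * a i := Finset.sum_congr rfl fun i _ => h3 i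
    _ = ((n : ℝ) - 1) * ∑ i : Fin n, a i := by rw [Finset.mul_sum]

/-- For the standard representation `V = ℂ^{2ℓ}` of `𝔰𝔭(ℓ,ℂ)`, `ℓ ≥ 1`, one
has `p_V = 2ℓ`: the inequality `ρ_𝔥 ≤ 2ℓ·ρ_V` holds on the Cartan subspace and the constant
`2ℓ` is optimal. -/
theorem sp_standard_pV (ℓ : ℕ) (hℓ : 1 ≤ ℓ) :
    (∀ x : Fin ℓ → ℝ,
      ((∑ i : Fin ℓ, ∑ j : Fin ℓ, if i < j then |x i - x j| + |x i + x j| else 0) +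
        2 * ∑ i : Fin ℓ, |x i|) ≤ (2 * ℓ : ℝ) * ∑ i : Fin ℓ, |x i|) ∧
    (∀ t : ℝ, (∀ x : Fin ℓ → ℝ,
      ((∑ i : Fin ℓ, ∑ j : Fin ℓ, if i < j then |x i - x j| + |x i + x j| else 0) +
        2 * ∑ i : Fin ℓ, |x i|) ≤ t * ∑ i : Fin ℓ, |x i|) → (2 * ℓ : ℝ) ≤ t) := by
  constructor
  · intro x
    have hbound : (∑ i : Fin ℓ, ∑ j : Fin ℓ, if i < j then |x i - x j| + |x i + x j| else 0)
        ≤ ∑ i : Fin ℓ, ∑ j : Fin ℓ, (if i < j then (2 * |x i| + 2 * |x j|) else 0) := by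
      apply Finset.sum_le_sum; intro i _
      apply Finset.sum_le_sum; intro j _
      split
      · have h1 := abs_add_le (x i) (x j)
        have h2 := abs_add_le (x i) (-(x j))
        rw [abs_neg] at h2
        have : x i + -(x j) = x i - x j := by ring
        rw [this] at h2
        linarith
      · exact le_refl 0
    have heq := pair_sum_aux (fun i => 2 * |x i|)
    have hsum2 : ∑ i : Fin ℓ, 2 * |x i| = 2 * ∑ i : Fin ℓ, |x i| := by
      rw [Finset.mul_sum]
    have hI : ∀ i j : Fin ℓ, (if i < j then (2 * |x i| + 2 * |x j|) else 0)
        = (if i < j then ((fun i => 2 * |x i|) i + (fun i => 2 * |x i|) j) else 0) := by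
      intro i j; rfl
    have hℓR : (1 : ℝ) ≤ (ℓ : ℝ) := by exact_mod_cast hℓ
    have habs : (0 : ℝ) ≤ ∑ i : Fin ℓ, |x i| :=
      Finset.sum_nonneg fun i _ => abs_nonneg _
    calc (∑ i : Fin ℓ, ∑ j : Fin ℓ, if i < j then |x i - x j| + |x i + x j| else 0) +
          2 * ∑ i : Fin ℓ, |x i|
        ≤ (∑ i : Fin ℓ, ∑ j : Fin ℓ, (if i < j then (2 * |x i| + 2 * |x j|) else 0)) +
          2 * ∑ i : Fin ℓ, |x i| := by linarith
      _ = ((ℓ : ℝ) - 1) * (2 * ∑ i : Fin ℓ, |x i|) + 2 * ∑ i : Fin ℓ, |x i| := by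
          rw [show (∑ i : Fin ℓ, ∑ j : Fin ℓ, (if i < j then (2 * |x i| + 2 * |x j|) else 0))
            = ((ℓ : ℝ) - 1) * ∑ i : Fin ℓ, 2 * |x i| from heq, hsum2]
      _ ≤ (2 * ℓ : ℝ) * ∑ i : Fin ℓ, |x i| := by nlinarith
  · intro t ht
    set i0 : Fin ℓ := ⟨0, hℓ⟩ with hi0
    set x : Fin ℓ → ℝ := fun i => if i = i0 then 1 else 0 with hx
    have hxsum : ∑ i : Fin ℓ, |x i| = 1 := by
      have : ∀ i : Fin ℓ, |x i| = if i = i0 then (1 : ℝ) else 0 := by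
        intro i; by_cases h : i = i0 <;> simp [hx, h]
      rw [Finset.sum_congr rfl fun i _ => this i, Finset.sum_ite_eq' Finset.univ i0 (fun _ => (1:ℝ))]
      simp
    have hi0bot : ∀ j : Fin ℓ, j ≠ i0 → i0 < j := by
      intro j hj
      exact lt_of_le_of_ne (by simp [hi0, Fin.le_def]) (Ne.symm hj)
    have hterm : ∀ i j : Fin ℓ,
        (if i < j then |x i - x j| + |x i + x j| else 0)
        = if i = i0 then (if j = i0 then 0 else 2) else 0 := by
      intro i j
      by_cases hi : i = i0
      · by_cases hj : j = i0
        · subst hi; subst hj; simp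
        · have hlt : i < j := hi ▸ hi0bot j hj
          subst hi
          simp [hlt, hx, hj, abs_of_nonneg]
          norm_num
      · have hxi : x i = 0 := by simp [hx, hi]
        by_cases hlt : i < j
        · have hji : j ≠ i0 := by
            intro h; subst h
            exact absurd (hi0bot i hi) (not_lt.mpr hlt.le)
          have hxj : x j = 0 := by simp [hx, hji]
          simp [hlt, hxi, hxj, hi]
        · simp [hlt, hi]
    have hdsum : (∑ i : Fin ℓ, ∑ j : Fin ℓ, if i < j then |x i - x j| + |x i + x j| else 0)
        = 2 * (ℓ : ℝ) - 2 := by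
      rw [Finset.sum_congr rfl fun i _ => Finset.sum_congr rfl fun j _ => hterm i j]
      have hinner : ∀ j : Fin ℓ, (if j = i0 then (0:ℝ) else 2) = 2 - (if j = i0 then 2 else 0) := by
        intro j; split <;> ring
      have hpull : ∀ i : Fin ℓ, (∑ j : Fin ℓ, if i = i0 then (if j = i0 then (0:ℝ) else 2) else 0)
          = if i = i0 then (∑ j : Fin ℓ, if j = i0 then (0:ℝ) else 2) else 0 := by
        intro i; split <;> simp
      rw [Finset.sum_congr rfl fun i _ => hpull i, Finset.sum_ite_eq' Finset.univ i0
        (fun _ => ∑ j : Fin ℓ, if j = i0 then (0:ℝ) else 2)]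
      · simp only [Finset.mem_univ, if_true]
        rw [Finset.sum_congr rfl fun j _ => hinner j, Finset.sum_sub_distrib,
          Finset.sum_ite_eq' Finset.univ i0 (fun _ => (2:ℝ))]
        simp [mul_comm]
    have := ht x
    rw [hxsum, hdsum] at this
    linarith
end

section
/- Let V be the standard representation ℂ^{2ℓ+1} of 𝔰𝔬(2ℓ+1,ℂ) with ℓ ≥ 2. Then p_V = 2ℓ − 1. -/
open Finset

lemma sum_ite_lt_count {n : ℕ} (c : Fin n → ℝ) (i : Fin n) :
    ∑ j : Fin n, (if i < j then c i else 0) = (n - 1 - (i : ℕ) : ℕ) * c i := by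
  rw [← Finset.sum_filter]
  simp [Finset.filter_lt_eq_Ioi, Fin.card_Ioi]

lemma sum_ite_gt_count {n : ℕ} (c : Fin n → ℝ) (i : Fin n) :
    ∑ j : Fin n, (if j < i then c i else 0) = ((i : ℕ) : ℝ) * c i := by
  rw [← Finset.sum_filter]
  simp [Finset.filter_gt_eq_Iio, Fin.card_Iio]

lemma key (n : ℕ) (a : Fin n → ℝ) :
    ∑ i : Fin n, ∑ j : Fin n, (if i < j then a i + a j else 0)
      = ∑ i : Fin n, ((n - 1 : ℕ) : ℝ) * a i := by
  have split : ∀ i j : Fin n, (if i < j then a i + a j else 0)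
      = (if i < j then a i else 0) + (if i < j then a j else 0) := by
    intro i j; split <;> simp
  simp_rw [split, Finset.sum_add_distrib]
  rw [Finset.sum_comm (f := fun i j => if i < j then a j else 0)]
  simp_rw [sum_ite_lt_count, sum_ite_gt_count]
  rw [← Finset.sum_add_distrib]
  congr 1; ext i
  have hi : (i : ℕ) < n := i.isLt
  have h2 : ((n - 1 - (i : ℕ) : ℕ) : ℝ) + ((i:ℕ) : ℝ) = ((n-1 : ℕ) : ℝ) := by
    norm_cast
    omega
  rw [← h2]; ring

/-- For the standard representation `V = ℂ^{2ℓ+1}` of `𝔰𝔬(2ℓ+1,ℂ)`, `ℓ ≥ 2`,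
one has `p_V = 2ℓ − 1`. -/
theorem so_odd_standard_pV (ℓ : ℕ) (hℓ : 2 ≤ ℓ) :
    (∀ x : Fin ℓ → ℝ,
      ((∑ i : Fin ℓ, ∑ j : Fin ℓ, if i < j then |x i - x j| + |x i + x j| else 0) +
        ∑ i : Fin ℓ, |x i|) ≤ (2 * ℓ - 1 : ℝ) * ∑ i : Fin ℓ, |x i|) ∧
    (∀ t : ℝ, (∀ x : Fin ℓ → ℝ,
      ((∑ i : Fin ℓ, ∑ j : Fin ℓ, if i < j then |x i - x j| + |x i + x j| else 0) +
        ∑ i : Fin ℓ, |x i|) ≤ t * ∑ i : Fin ℓ, |x i|) → (2 * ℓ - 1 : ℝ) ≤ t) := by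
  constructor
  · intro x
    set a : Fin ℓ → ℝ := fun i => |x i| with ha
    have hbd : ∀ i j : Fin ℓ,
        (if i < j then |x i - x j| + |x i + x j| else 0)
          ≤ (if i < j then 2 * (a i + a j) else 0) := by
      intro i j
      split
      · have h1 : |x i - x j| ≤ |x i| + |x j| := abs_sub _ _
        have h2 : |x i + x j| ≤ |x i| + |x j| := abs_add_le _ _
        simp only [ha]; linarith
      · exact le_rfl
    have step1 : (∑ i : Fin ℓ, ∑ j : Fin ℓ, if i < j then |x i - x j| + |x i + x j| else 0)
        ≤ ∑ i : Fin ℓ, ∑ j : Fin ℓ, (if i < j then 2 * (a i + a j) else 0) := by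
      apply Finset.sum_le_sum; intro i _
      exact Finset.sum_le_sum fun j _ => hbd i j
    have step2 : (∑ i : Fin ℓ, ∑ j : Fin ℓ, (if i < j then 2 * (a i + a j) else 0))
        = 2 * (((ℓ - 1 : ℕ) : ℝ) * ∑ i : Fin ℓ, a i) := by
      have : ∀ i j : Fin ℓ, (if i < j then 2 * (a i + a j) else 0)
          = 2 * (if i < j then a i + a j else 0) := by
        intro i j; split <;> ring
      simp_rw [this, ← Finset.mul_sum]
      rw [key ℓ a, ← Finset.mul_sum]
    have hcast : ((ℓ - 1 : ℕ) : ℝ) = (ℓ : ℝ) - 1 := by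
      have : 1 ≤ ℓ := by omega
      push_cast [this]; ring
    have hsum : 0 ≤ ∑ i : Fin ℓ, a i := Finset.sum_nonneg fun i _ => abs_nonneg _
    calc (∑ i : Fin ℓ, ∑ j : Fin ℓ, if i < j then |x i - x j| + |x i + x j| else 0) +
          ∑ i : Fin ℓ, |x i|
        ≤ 2 * (((ℓ - 1 : ℕ) : ℝ) * ∑ i : Fin ℓ, a i) + ∑ i : Fin ℓ, a i := by
          rw [step2.symm] at *; exact add_le_add step1 (le_refl _)
      _ = (2 * ℓ - 1 : ℝ) * ∑ i : Fin ℓ, a i := by rw [hcast]; ring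
  · intro t ht
    have h0 : (0 : ℕ) < ℓ := by omega
    set z : Fin ℓ := ⟨0, h0⟩ with hz
    set x : Fin ℓ → ℝ := fun i => if i = z then 1 else 0 with hx
    have hxabs : ∀ i, |x i| = if i = z then 1 else 0 := by
      intro i; simp only [hx]; split <;> simp
    have hsum1 : ∑ i : Fin ℓ, |x i| = 1 := by
      simp [hxabs]
    have hterm : ∀ i j : Fin ℓ,
        (if i < j then |x i - x j| + |x i + x j| else 0)
          = (if i = z ∧ i < j then 2 else 0) := by
      intro i j
      by_cases hij : i < j
      · have hjz : j ≠ z := by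
          intro h; rw [h] at hij
          exact absurd hij (by simp [hz, Fin.lt_def])
        by_cases hiz : i = z
        · simp [hij, hiz, hx, hjz]; norm_num
        · simp [hij, hiz, hx, hjz]
      · simp [hij, fun h : i = z ∧ i < j => hij h.2]
    have hdouble : (∑ i : Fin ℓ, ∑ j : Fin ℓ, if i < j then |x i - x j| + |x i + x j| else 0)
        = 2 * ((ℓ - 1 : ℕ) : ℝ) := by
      simp_rw [hterm]
      have : ∀ i j : Fin ℓ, (if i = z ∧ i < j then (2:ℝ) else 0)
          = if i = z then (if i < j then 2 else 0) else 0 := by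
        intro i j; by_cases h : i = z <;> simp [h]
      simp_rw [this]
      have pull : ∀ i : Fin ℓ, (∑ j : Fin ℓ, if i = z then (if i < j then (2:ℝ) else 0) else 0)
          = if i = z then (∑ j : Fin ℓ, if i < j then (2:ℝ) else 0) else 0 := by
        intro i; split <;> simp
      simp_rw [pull]
      rw [Finset.sum_ite_eq' Finset.univ z (fun i => ∑ j : Fin ℓ, if i < j then (2:ℝ) else 0)]
      have := sum_ite_lt_count (fun _ => (2:ℝ)) z
      simp only [Finset.mem_univ, if_true]
      rw [this]
      simp [hz]
      ring
    have := ht x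
    rw [hsum1, hdouble, mul_one] at this
    have hcast : ((ℓ - 1 : ℕ) : ℝ) = (ℓ : ℝ) - 1 := by
      have h1 : 1 ≤ ℓ := by omega
      push_cast [h1]; ring
    rw [hcast] at this
    linarith
end

section
/- Let V = ℂ^{ℓ+1} be the standard representation of 𝔰𝔩(ℓ+1,ℂ) with ℓ ≥ 1. Then p_V = 2ℓ, i.e., sup over nonzero real traceless diagonal X of ρ_𝔥(X)/ρ_V(X) equals 2ℓ. -/
open Finset

lemma pair_sum_key {n : ℕ} (a : Fin n → ℝ) :
    ∑ i, ∑ j, (if i < j then a i + a j else 0) = ((n : ℝ) - 1) * ∑ i, a i := by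
  set S := ∑ i, ∑ j, (if i < j then a i + a j else 0) with hS
  set S' := ∑ i : Fin n, ∑ j, (if j < i then a i + a j else 0) with hS'
  have hrow : ∀ i : Fin n,
      (∑ j, (if i < j then a i + a j else 0)) + ∑ j, (if j < i then a i + a j else 0)
        = ∑ j, (if i ≠ j then a i + a j else 0) := by
    intro i
    rw [← Finset.sum_add_distrib]
    refine Finset.sum_congr rfl fun j _ => ?_
    rcases lt_trichotomy i j with h | h | h
    · simp [h, h.ne, h.ne', not_lt_of_gt h]
    · simp [h]
    · simp [h, h.ne, h.ne', not_lt_of_gt h]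
  have hne : ∀ i : Fin n, (∑ j, (if i ≠ j then a i + a j else 0))
      = (n : ℝ) * a i + (∑ j, a j) - (a i + a i) := by
    intro i
    have h1 : ∀ j : Fin n, (if i ≠ j then a i + a j else 0)
        = (a i + a j) - (if j = i then a i + a j else 0) := by
      intro j
      by_cases h : j = i
      · simp [h]
      · rw [if_pos (show i ≠ j from fun hh => h hh.symm), if_neg h]; ring
    simp only [h1]
    rw [Finset.sum_sub_distrib, Finset.sum_ite_eq' Finset.univ i (fun j => a i + a j)]
    simp [Finset.sum_add_distrib, mul_comm]
  have hswap : S' = S := by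
    rw [hS', Finset.sum_comm]
    refine Finset.sum_congr rfl fun i _ => Finset.sum_congr rfl fun j _ => ?_
    rw [add_comm]
  have h2 : S + S' = 2 * ((n : ℝ) - 1) * ∑ i, a i := by
    rw [hS, hS', ← Finset.sum_add_distrib]
    simp only [hrow, hne]
    rw [Finset.sum_sub_distrib, Finset.sum_add_distrib, ← Finset.mul_sum,
      Finset.sum_const, Finset.card_univ, Fintype.card_fin]
    push_cast
    ring_nf
    rw [Finset.sum_mul]
  rw [hswap] at h2
  linarith

/-- For the standard representation `V = ℂ^{ℓ+1}` of `𝔰𝔩(ℓ+1,ℂ)`, `ℓ ≥ 1`,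
one has `p_V = 2ℓ`: for real traceless diagonal `X`, `ρ_𝔥(X) ≤ 2ℓ·ρ_V(X)`, and `2ℓ` is the
least such constant. -/
theorem sl_standard_pV (ℓ : ℕ) (hℓ : 1 ≤ ℓ) :
    (∀ x : Fin (ℓ + 1) → ℝ, (∑ i, x i) = 0 →
      (∑ i : Fin (ℓ + 1), ∑ j : Fin (ℓ + 1), if i < j then |x i - x j| else 0) ≤
        (2 * ℓ : ℝ) * ((1 / 2) * ∑ i : Fin (ℓ + 1), |x i|)) ∧
    (∀ t : ℝ, (∀ x : Fin (ℓ + 1) → ℝ, (∑ i, x i) = 0 →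
      (∑ i : Fin (ℓ + 1), ∑ j : Fin (ℓ + 1), if i < j then |x i - x j| else 0) ≤
        t * ((1 / 2) * ∑ i : Fin (ℓ + 1), |x i|)) → (2 * ℓ : ℝ) ≤ t) := by
  constructor
  · intro x _
    have h1 : (∑ i : Fin (ℓ + 1), ∑ j : Fin (ℓ + 1), if i < j then |x i - x j| else 0) ≤
        ∑ i : Fin (ℓ + 1), ∑ j : Fin (ℓ + 1), if i < j then |x i| + |x j| else 0 := by
      refine Finset.sum_le_sum fun i _ => Finset.sum_le_sum fun j _ => ?_
      split_ifs with h
      · exact abs_sub _ _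
      · exact le_refl 0
    calc _ ≤ _ := h1
      _ = ((ℓ + 1 : ℝ) - 1) * ∑ i : Fin (ℓ + 1), |x i| := by
          have := pair_sum_key (fun i : Fin (ℓ + 1) => |x i|)
          push_cast at this ⊢
          exact this
      _ = (2 * ℓ : ℝ) * ((1 / 2) * ∑ i : Fin (ℓ + 1), |x i|) := by ring
  · intro t ht
    have h01 : (0 : Fin (ℓ + 1)) ≠ 1 := by
      have : (1 : ℕ) < ℓ + 1 := by omega
      simp [Fin.ext_iff, Fin.val_one', Nat.mod_eq_of_lt this]
    set x : Fin (ℓ + 1) → ℝ :=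
      fun i => (if i = 0 then (1 : ℝ) else 0) + (if i = 1 then (-1 : ℝ) else 0) with hx
    have hsum : (∑ i, x i) = 0 := by
      rw [hx]
      rw [Finset.sum_add_distrib, Finset.sum_ite_eq' Finset.univ (0 : Fin (ℓ+1)) (fun _ => (1:ℝ)),
        Finset.sum_ite_eq' Finset.univ (1 : Fin (ℓ+1)) (fun _ => (-1:ℝ))]
      simp
    have habs : ∀ i : Fin (ℓ + 1), |x i| = (if i = 0 then (1 : ℝ) else 0) + (if i = 1 then (1 : ℝ) else 0) := by
      intro i
      rw [hx]
      by_cases h0 : i = 0 <;> by_cases h1 : i = 1 <;> simp_all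
    have habsum : (∑ i : Fin (ℓ + 1), |x i|) = 2 := by
      simp only [habs]
      rw [Finset.sum_add_distrib, Finset.sum_ite_eq' Finset.univ (0 : Fin (ℓ+1)) (fun _ => (1:ℝ)),
        Finset.sum_ite_eq' Finset.univ (1 : Fin (ℓ+1)) (fun _ => (1:ℝ))]
      norm_num
    have hdiff : ∀ i j : Fin (ℓ + 1), i ≠ j → |x i - x j| = |x i| + |x j| := by
      intro i j hij
      rw [hx]
      by_cases hi0 : i = 0 <;> by_cases hi1 : i = 1 <;> by_cases hj0 : j = 0 <;>
        by_cases hj1 : j = 1 <;> simp_all <;> norm_num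
    have hlhs : (∑ i : Fin (ℓ + 1), ∑ j : Fin (ℓ + 1), if i < j then |x i - x j| else 0)
        = (2 * ℓ : ℝ) := by
      have he : (∑ i : Fin (ℓ + 1), ∑ j : Fin (ℓ + 1), if i < j then |x i - x j| else 0)
          = ∑ i : Fin (ℓ + 1), ∑ j : Fin (ℓ + 1), if i < j then |x i| + |x j| else 0 := by
        refine Finset.sum_congr rfl fun i _ => Finset.sum_congr rfl fun j _ => ?_
        split_ifs with h
        · exact hdiff i j h.ne
        · rfl
      rw [he, pair_sum_key (fun i : Fin (ℓ + 1) => |x i|), habsum]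
      push_cast
      ring
    have := ht x hsum
    rw [hlhs, habsum] at this
    linarith
end

section
/- Let 𝔥 = 𝔰𝔩(p,ℂ) ⊕ 𝔰𝔩(q,ℂ) ⊕ 𝔰𝔩(r,ℂ) with p ≥ q ≥ r ≥ 1 act on V = (ℂ^p ⊗ (ℂ^q)*) ⊕ (ℂ^q ⊗ (ℂ^r)*) ⊕ (ℂ^p ⊗ (ℂ^r)*). Then ρ_𝔥 ≤ 2ρ_V if and only if p ≤ q + r + 1. -/
open Finset MeasureTheory

/-! ### Auxiliary lemmas -/

lemma rho_key_s18 (n e b c u v : ℤ) (hn : 1 ≤ n) (he : 1 ≤ e) (hb : 0 ≤ b) (hc : 0 ≤ c)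
    (hu : 0 ≤ u) (hv : 0 ≤ v) (h1 : n ≤ b + c) (h2 : e ≤ u + v)
    (h3 : n + e ≤ c + v) (h4 : c + v ≤ b + u) : n * e ≤ 2 * (b * v + c * u) := by
  rcases le_or_gt n c with hcn | hcn
  · rcases le_or_gt e u with hue | hue
    · nlinarith [mul_nonneg (by linarith : (0:ℤ) ≤ c - n) (by linarith : (0:ℤ) ≤ u - e),
        mul_nonneg hb hv, mul_nonneg (by linarith : (0:ℤ) ≤ n) (by linarith : (0:ℤ) ≤ u - e),
        mul_nonneg (by linarith : (0:ℤ) ≤ e) (by linarith : (0:ℤ) ≤ c - n)]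
    · nlinarith [mul_nonneg (by linarith : (0:ℤ) ≤ b - (n + e - u)) (by linarith : (0:ℤ) ≤ v - (e - u)),
        mul_nonneg (by linarith : (0:ℤ) ≤ c - n) hu, sq_nonneg (e - u),
        mul_nonneg (by linarith : (0:ℤ) ≤ n) hu]
  · rcases le_or_gt b (n + e) with hbe | hbe
    · rcases le_or_gt n (2 * b) with hb2 | hb2
      · nlinarith [mul_nonneg hb (by linarith : (0:ℤ) ≤ v - (n + e - c)),
          mul_nonneg (by linarith : (0:ℤ) ≤ 2 * b - n) (by linarith : (0:ℤ) ≤ e),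
          mul_nonneg hb (by linarith : (0:ℤ) ≤ n - c), mul_nonneg hc hu]
      · nlinarith [mul_nonneg hc (by linarith : (0:ℤ) ≤ u - (n + e - b)),
          mul_nonneg (by linarith : (0:ℤ) ≤ c - (n - b)) (by linarith : (0:ℤ) ≤ e),
          mul_nonneg (by linarith : (0:ℤ) ≤ n - 2 * b) (by linarith : (0:ℤ) ≤ e),
          mul_nonneg hc (by linarith : (0:ℤ) ≤ n - b), mul_nonneg hb hv]
    · nlinarith [mul_nonneg (by linarith : (0:ℤ) ≤ b - (n + e)) hv,
        mul_nonneg (by linarith : (0:ℤ) ≤ n + e) (by linarith : (0:ℤ) ≤ v - (n + e - c)),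
        mul_nonneg (by linarith : (0:ℤ) ≤ n + e) (by linarith : (0:ℤ) ≤ n - c),
        mul_nonneg hc hu, sq_nonneg (n - e)]

lemma rho_count_ineq (p q r a b c : ℤ) (ha0 : 0 ≤ a) (hap : a ≤ p) (hb0 : 0 ≤ b) (hbq : b ≤ q)
    (hc0 : 0 ≤ c) (hcr : c ≤ r) (hrq : r ≤ q) (hqp : q ≤ p)
    (hp : p ≤ q + r + 1) :
    a*(p-a) + b*(q-b) + c*(r-c) ≤ a*q + b*p - 2*a*b + b*r + c*q - 2*b*c + a*r + c*p - 2*a*c := by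
  rcases le_or_gt (b+c) a with h | h
  · nlinarith [mul_nonneg (sub_nonneg.2 h) (by linarith : (0:ℤ) ≤ a - b - c - (p - q - r) + 1),
      mul_nonneg hb0 (sub_nonneg.2 hcr), mul_nonneg hc0 (sub_nonneg.2 hbq)]
  · rcases le_or_gt ((q+r-p) - (b+c-a)) 0 with he | he
    · nlinarith [mul_nonneg (by linarith : (0:ℤ) ≤ b + c - a) (by linarith : (0:ℤ) ≤ (b+c-a) - (q+r-p)),
        mul_nonneg hb0 (sub_nonneg.2 hcr), mul_nonneg hc0 (sub_nonneg.2 hbq)]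
    · have := rho_key_s18 (b+c-a) ((q+r-p) - (b+c-a)) b c (q-b) (r-c)
        (by linarith) (by linarith) hb0 hc0 (by linarith) (by linarith)
        (by linarith) (by linarith) (by linarith) (by linarith)
      nlinarith [this]

lemma ind_integrable (a b : ℝ) :
    Integrable ((Set.Ioc a b).indicator (fun _ => (1:ℝ))) volume := by
  rw [integrable_indicator_iff measurableSet_Ioc]
  exact integrableOn_const (by rw [Real.volume_Ioc]; exact ENNReal.ofReal_ne_top)

lemma abs_eq_integral (u v : ℝ) :
    |u - v| = ∫ t, (Set.Ioc (min u v) (max u v)).indicator (fun _ => (1:ℝ)) t := by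
  rw [show ((fun _ => (1:ℝ)) : ℝ → ℝ) = 1 from rfl, integral_indicator_one measurableSet_Ioc,
    measureReal_def, Real.volume_Ioc, ENNReal.toReal_ofReal (by simp [min_le_max] : (0:ℝ) ≤ max u v - min u v)]
  rcases le_total u v with h | h
  · rw [abs_of_nonpos (by linarith), max_eq_right h, min_eq_left h]; ring
  · rw [abs_of_nonneg (by linarith), max_eq_left h, min_eq_right h]

lemma ind_eq_chi (u v t : ℝ) :
    (Set.Ioc (min u v) (max u v)).indicator (fun _ => (1:ℝ)) t
      = |(if t ≤ u then (1:ℝ) else 0) - (if t ≤ v then (1:ℝ) else 0)| := by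
  by_cases hu : t ≤ u <;> by_cases hv : t ≤ v
  · rw [Set.indicator_of_notMem (fun hmem => absurd hmem.1 (not_lt.2 (le_min hu hv)))]
    simp [hu, hv]
  · rw [Set.indicator_of_mem (Set.mem_Ioc.2 ⟨lt_of_le_of_lt (min_le_right u v) (not_le.1 hv),
      le_trans hu (le_max_left u v)⟩)]
    simp [hu, hv]
  · rw [Set.indicator_of_mem (Set.mem_Ioc.2 ⟨lt_of_le_of_lt (min_le_left u v) (not_le.1 hu),
      le_trans hv (le_max_right u v)⟩)]
    simp [hu, hv]
  · rw [Set.indicator_of_notMem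
      (fun hmem => absurd hmem.2 (not_le.2 (max_lt (not_le.1 hu) (not_le.1 hv))))]
    simp [hu, hv]

lemma double_sum_eq_integral {m n : ℕ} (f : Fin m → ℝ) (g : Fin n → ℝ) :
    (∑ i, ∑ j, |f i - g j|)
      = ∫ t, ∑ i, ∑ j, (Set.Ioc (min (f i) (g j)) (max (f i) (g j))).indicator
          (fun _ => (1:ℝ)) t := by
  rw [integral_finset_sum _ (fun i _ => integrable_finset_sum _ (fun j _ => ind_integrable _ _))]
  refine Finset.sum_congr rfl (fun i _ => ?_)
  rw [integral_finset_sum _ (fun j _ => ind_integrable _ _)]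
  exact Finset.sum_congr rfl (fun j _ => abs_eq_integral _ _)

lemma half_sum {n : ℕ} (h : Fin n → Fin n → ℝ) (hsymm : ∀ i j, h i j = h j i)
    (hdiag : ∀ i, h i i = 0) :
    (∑ i, ∑ j, if i < j then h i j else 0) = (1/2) * ∑ i, ∑ j, h i j := by
  have key : (∑ i, ∑ j, h i j)
      = (∑ i, ∑ j, if i < j then h i j else 0) + (∑ i, ∑ j, if j < i then h i j else 0) := by
    rw [← Finset.sum_add_distrib]
    refine Finset.sum_congr rfl (fun i _ => ?_)
    rw [← Finset.sum_add_distrib]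
    refine Finset.sum_congr rfl (fun j _ => ?_)
    rcases lt_trichotomy i j with hij | hij | hij
    · simp [hij, not_lt.2 hij.le, hij.ne']
    · simp [hij, hdiag]
    · simp [hij, not_lt.2 hij.le, hij.ne]
  have swap : (∑ i, ∑ j, if j < i then h i j else 0)
      = (∑ i, ∑ j, if i < j then h i j else 0) := by
    rw [Finset.sum_comm]
    exact Finset.sum_congr rfl fun i _ => Finset.sum_congr rfl fun j _ => by
      rcases lt_or_ge i j with hij | hij
      · simp [hij, hsymm i j]
      · simp [not_lt.2 hij]
  rw [swap] at key
  linarith [key]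

lemma chi_sum {m n : ℕ} (f : Fin m → ℝ) (g : Fin n → ℝ) (t : ℝ) :
    (∑ i, ∑ j, |(if t ≤ f i then (1:ℝ) else 0) - (if t ≤ g j then (1:ℝ) else 0)|)
      = (n : ℝ) * ((univ.filter fun i => t ≤ f i).card : ℝ)
        + (m : ℝ) * ((univ.filter fun j => t ≤ g j).card : ℝ)
        - 2 * ((univ.filter fun i => t ≤ f i).card : ℝ)
            * ((univ.filter fun j => t ≤ g j).card : ℝ) := by
  have hpt : ∀ (P Q : Prop) [Decidable P] [Decidable Q],
      |(if P then (1:ℝ) else 0) - (if Q then (1:ℝ) else 0)|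
        = (if P then (1:ℝ) else 0) + (if Q then (1:ℝ) else 0)
          - 2 * ((if P then (1:ℝ) else 0) * (if Q then (1:ℝ) else 0)) := by
    intros P Q _ _; split_ifs <;> norm_num
  have step1 : (∑ i, ∑ j, |(if t ≤ f i then (1:ℝ) else 0) - (if t ≤ g j then (1:ℝ) else 0)|)
      = ∑ i, ∑ j, ((if t ≤ f i then (1:ℝ) else 0) + (if t ≤ g j then (1:ℝ) else 0)
          - 2 * ((if t ≤ f i then (1:ℝ) else 0) * (if t ≤ g j then (1:ℝ) else 0))) :=
    Finset.sum_congr rfl fun i _ => Finset.sum_congr rfl fun j _ => hpt _ _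
  rw [step1]
  have step2 : ∀ c : ℝ, (∑ j, (c + (if t ≤ g j then (1:ℝ) else 0)
        - 2 * (c * (if t ≤ g j then (1:ℝ) else 0))))
      = (n : ℝ) * c + (∑ j, if t ≤ g j then (1:ℝ) else 0)
        - 2 * (c * (∑ j, if t ≤ g j then (1:ℝ) else 0)) := by
    intro c
    rw [Finset.sum_sub_distrib, Finset.sum_add_distrib, Finset.sum_const, Finset.card_univ,
      Fintype.card_fin, nsmul_eq_mul, ← Finset.mul_sum, ← Finset.mul_sum]
  have step3 : (∑ i, ∑ j, ((if t ≤ f i then (1:ℝ) else 0) + (if t ≤ g j then (1:ℝ) else 0)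
          - 2 * ((if t ≤ f i then (1:ℝ) else 0) * (if t ≤ g j then (1:ℝ) else 0))))
      = ∑ i, ((n : ℝ) * (if t ≤ f i then (1:ℝ) else 0)
          + (∑ j, if t ≤ g j then (1:ℝ) else 0)
          - 2 * ((if t ≤ f i then (1:ℝ) else 0) * (∑ j, if t ≤ g j then (1:ℝ) else 0))) :=
    Finset.sum_congr rfl fun i _ => step2 _
  rw [step3, Finset.sum_sub_distrib, Finset.sum_add_distrib, Finset.sum_const,
    Finset.card_univ, Fintype.card_fin, nsmul_eq_mul, ← Finset.mul_sum, ← Finset.mul_sum,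
    ← Finset.sum_mul, Finset.sum_boole, Finset.sum_boole]
  ring

/-- The double sum of indicators, rewritten via `ind_eq_chi` and `chi_sum`. -/
lemma ind_double_sum {m n : ℕ} (f : Fin m → ℝ) (g : Fin n → ℝ) (t : ℝ) :
    (∑ i, ∑ j, (Set.Ioc (min (f i) (g j)) (max (f i) (g j))).indicator (fun _ => (1:ℝ)) t)
      = (n : ℝ) * ((univ.filter fun i => t ≤ f i).card : ℝ)
        + (m : ℝ) * ((univ.filter fun j => t ≤ g j).card : ℝ)
        - 2 * ((univ.filter fun i => t ≤ f i).card : ℝ)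
            * ((univ.filter fun j => t ≤ g j).card : ℝ) := by
  rw [← chi_sum]
  exact Finset.sum_congr rfl fun i _ => Finset.sum_congr rfl fun j _ => ind_eq_chi _ _ _

lemma pointwise_ineq (p q r : ℕ) (hrq : r ≤ q) (hqp : q ≤ p) (hp : p ≤ q + r + 1)
    (x : Fin p → ℝ) (y : Fin q → ℝ) (z : Fin r → ℝ) (t : ℝ) :
    (∑ i, ∑ i', (Set.Ioc (min (x i) (x i')) (max (x i) (x i'))).indicator (fun _ => (1:ℝ)) t)
    + (∑ j, ∑ j', (Set.Ioc (min (y j) (y j')) (max (y j) (y j'))).indicator (fun _ => (1:ℝ)) t)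
    + (∑ k, ∑ k', (Set.Ioc (min (z k) (z k')) (max (z k) (z k'))).indicator (fun _ => (1:ℝ)) t)
    ≤ 2 * (∑ i, ∑ j, (Set.Ioc (min (x i) (y j)) (max (x i) (y j))).indicator (fun _ => (1:ℝ)) t)
    + 2 * (∑ j, ∑ k, (Set.Ioc (min (y j) (z k)) (max (y j) (z k))).indicator (fun _ => (1:ℝ)) t)
    + 2 * (∑ i, ∑ k, (Set.Ioc (min (x i) (z k)) (max (x i) (z k))).indicator (fun _ => (1:ℝ)) t) := by
  rw [ind_double_sum x x t, ind_double_sum y y t, ind_double_sum z z t,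
    ind_double_sum x y t, ind_double_sum y z t, ind_double_sum x z t]
  set a := (univ.filter fun i => t ≤ x i).card with ha
  set b := (univ.filter fun j => t ≤ y j).card with hb
  set c := (univ.filter fun k => t ≤ z k).card with hc
  have hap : a ≤ p := le_trans (Finset.card_filter_le _ _) (by simp)
  have hbq : b ≤ q := le_trans (Finset.card_filter_le _ _) (by simp)
  have hcr : c ≤ r := le_trans (Finset.card_filter_le _ _) (by simp)
  have key := rho_count_ineq (p : ℤ) (q : ℤ) (r : ℤ) (a : ℤ) (b : ℤ) (c : ℤ)
    (by positivity) (by exact_mod_cast hap) (by positivity) (by exact_mod_cast hbq)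
    (by positivity) (by exact_mod_cast hcr) (by exact_mod_cast hrq) (by exact_mod_cast hqp)
    (by exact_mod_cast hp)
  have keyR : (a:ℝ)*(p-a) + b*(q-b) + c*(r-c)
      ≤ a*q + b*p - 2*a*b + b*r + c*q - 2*b*c + a*r + c*p - 2*a*c := by exact_mod_cast key
  nlinarith [keyR]

lemma forward_ineq (p q r : ℕ) (hrq : r ≤ q) (hqp : q ≤ p) (hp : p ≤ q + r + 1)
    (x : Fin p → ℝ) (y : Fin q → ℝ) (z : Fin r → ℝ) :
    ((∑ i : Fin p, ∑ i' : Fin p, if i < i' then |x i - x i'| else 0) +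
        (∑ j : Fin q, ∑ j' : Fin q, if j < j' then |y j - y j'| else 0) +
        (∑ k : Fin r, ∑ k' : Fin r, if k < k' then |z k - z k'| else 0)) ≤
      2 * ((1 / 2) * ((∑ i : Fin p, ∑ j : Fin q, |x i - y j|) +
        (∑ j : Fin q, ∑ k : Fin r, |y j - z k|) +
        (∑ i : Fin p, ∑ k : Fin r, |x i - z k|))) := by
  rw [half_sum (fun i i' => |x i - x i'|) (fun i j => abs_sub_comm _ _) (fun i => by simp),
    half_sum (fun j j' => |y j - y j'|) (fun i j => abs_sub_comm _ _) (fun i => by simp),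
    half_sum (fun k k' => |z k - z k'|) (fun i j => abs_sub_comm _ _) (fun i => by simp)]
  have main : (∑ i, ∑ i', |x i - x i'|) + (∑ j, ∑ j', |y j - y j'|) + (∑ k, ∑ k', |z k - z k'|)
      ≤ 2 * (∑ i, ∑ j, |x i - y j|) + 2 * (∑ j, ∑ k, |y j - z k|)
        + 2 * (∑ i, ∑ k, |x i - z k|) := by
    rw [double_sum_eq_integral x x, double_sum_eq_integral y y, double_sum_eq_integral z z,
      double_sum_eq_integral x y, double_sum_eq_integral y z, double_sum_eq_integral x z]
    have hint : ∀ {m n : ℕ} (f : Fin m → ℝ) (g : Fin n → ℝ),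
        Integrable (fun t => ∑ i, ∑ j, (Set.Ioc (min (f i) (g j)) (max (f i) (g j))).indicator
          (fun _ => (1:ℝ)) t) volume :=
      fun f g => integrable_finset_sum _ (fun i _ => integrable_finset_sum _
        (fun j _ => ind_integrable _ _))
    have h1 : Integrable (fun t => (∑ i, ∑ i', (Set.Ioc (min (x i) (x i')) (max (x i) (x i'))).indicator (fun _ => (1:ℝ)) t)
        + (∑ j, ∑ j', (Set.Ioc (min (y j) (y j')) (max (y j) (y j'))).indicator (fun _ => (1:ℝ)) t)) volume :=
      (hint x x).add (hint y y)
    have h2 : Integrable (fun t => 2 * (∑ i, ∑ j, (Set.Ioc (min (x i) (y j)) (max (x i) (y j))).indicator (fun _ => (1:ℝ)) t)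
        + 2 * (∑ j, ∑ k, (Set.Ioc (min (y j) (z k)) (max (y j) (z k))).indicator (fun _ => (1:ℝ)) t)) volume :=
      ((hint x y).const_mul 2).add ((hint y z).const_mul 2)
    calc (∫ t, ∑ i, ∑ i', (Set.Ioc (min (x i) (x i')) (max (x i) (x i'))).indicator (fun _ => (1:ℝ)) t)
        + (∫ t, ∑ j, ∑ j', (Set.Ioc (min (y j) (y j')) (max (y j) (y j'))).indicator (fun _ => (1:ℝ)) t)
        + (∫ t, ∑ k, ∑ k', (Set.Ioc (min (z k) (z k')) (max (z k) (z k'))).indicator (fun _ => (1:ℝ)) t)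
        = ∫ t, ((∑ i, ∑ i', (Set.Ioc (min (x i) (x i')) (max (x i) (x i'))).indicator (fun _ => (1:ℝ)) t)
            + (∑ j, ∑ j', (Set.Ioc (min (y j) (y j')) (max (y j) (y j'))).indicator (fun _ => (1:ℝ)) t)
            + (∑ k, ∑ k', (Set.Ioc (min (z k) (z k')) (max (z k) (z k'))).indicator (fun _ => (1:ℝ)) t)) := by
          rw [integral_add h1 (hint z z), integral_add (hint x x) (hint y y)]
      _ ≤ ∫ t, (2 * (∑ i, ∑ j, (Set.Ioc (min (x i) (y j)) (max (x i) (y j))).indicator (fun _ => (1:ℝ)) t)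
            + 2 * (∑ j, ∑ k, (Set.Ioc (min (y j) (z k)) (max (y j) (z k))).indicator (fun _ => (1:ℝ)) t)
            + 2 * (∑ i, ∑ k, (Set.Ioc (min (x i) (z k)) (max (x i) (z k))).indicator (fun _ => (1:ℝ)) t)) := by
          refine integral_mono (((hint x x).add (hint y y)).add (hint z z))
            ((((hint x y).const_mul 2).add ((hint y z).const_mul 2)).add ((hint x z).const_mul 2))
            (fun t => ?_)
          exact pointwise_ineq p q r hrq hqp hp x y z t
      _ = _ := by
          rw [integral_add h2 ((hint x z).const_mul 2),
            integral_add ((hint x y).const_mul 2) ((hint y z).const_mul 2),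
            integral_const_mul, integral_const_mul, integral_const_mul]
  linarith [main]

def ctr (p : ℕ) (i : Fin p) : ℝ :=
  (if (i:ℕ) = 0 then (1:ℝ) else 0) - (if (i:ℕ) = 1 then (1:ℝ) else 0)

lemma sum_ind_eq_one (p k : ℕ) (hk : k < p) :
    (∑ i : Fin p, if (i:ℕ) = k then (1:ℝ) else 0) = 1 := by
  rw [Finset.sum_eq_single_of_mem (⟨k, hk⟩ : Fin p) (mem_univ _)
    (fun j _ hj => if_neg (fun h => hj (Fin.ext h)))]
  simp

lemma ctr_sum (p : ℕ) (hp : 2 ≤ p) : (∑ i, ctr p i) = 0 := by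
  unfold ctr
  rw [Finset.sum_sub_distrib, sum_ind_eq_one p 0 (by omega), sum_ind_eq_one p 1 (by omega)]
  ring

lemma ctr_abs (p : ℕ) (i : Fin p) :
    |ctr p i| = (if (i:ℕ) = 0 then (1:ℝ) else 0) + (if (i:ℕ) = 1 then (1:ℝ) else 0) := by
  unfold ctr
  by_cases h0 : (i:ℕ) = 0 <;> by_cases h1 : (i:ℕ) = 1 <;> simp [h0, h1] <;> first | omega | norm_num

lemma ctr_abs_sum (p : ℕ) (hp : 2 ≤ p) : (∑ i, |ctr p i|) = 2 := by
  rw [Finset.sum_congr rfl (fun i _ => ctr_abs p i), Finset.sum_add_distrib,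
    sum_ind_eq_one p 0 (by omega), sum_ind_eq_one p 1 (by omega)]
  ring

lemma ctr_pair (p : ℕ) (i i' : Fin p) :
    |ctr p i - ctr p i'| = |ctr p i| + |ctr p i'| - (if i' = i then 2 * |ctr p i'| else 0) := by
  by_cases hii : i' = i
  · subst hii; rw [sub_self, abs_zero, if_pos rfl]; ring
  · rw [if_neg hii]
    have hne : (i:ℕ) ≠ (i':ℕ) := fun h => hii (Fin.ext h.symm)
    unfold ctr
    by_cases h0 : (i:ℕ) = 0 <;> by_cases h1 : (i:ℕ) = 1 <;>
      by_cases h0' : (i':ℕ) = 0 <;> by_cases h1' : (i':ℕ) = 1 <;>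
      simp [h0, h1, h0', h1'] <;> first | omega | norm_num

lemma ctr_T1 (p : ℕ) (hp : 2 ≤ p) :
    (∑ i, ∑ i', |ctr p i - ctr p i'|) = 4 * p - 4 := by
  have inner : ∀ i : Fin p, (∑ i', |ctr p i - ctr p i'|)
      = p * |ctr p i| + 2 - 2 * |ctr p i| := by
    intro i
    rw [Finset.sum_congr rfl (fun i' _ => ctr_pair p i i'), Finset.sum_sub_distrib,
      Finset.sum_add_distrib, Finset.sum_const, Finset.card_univ, Fintype.card_fin,
      nsmul_eq_mul, ctr_abs_sum p hp, Finset.sum_ite_eq' univ i (fun i' => 2 * |ctr p i'|)]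
    simp
  rw [Finset.sum_congr rfl (fun i _ => inner i), Finset.sum_sub_distrib,
    Finset.sum_add_distrib, ← Finset.mul_sum, ← Finset.mul_sum, ctr_abs_sum p hp,
    Finset.sum_const, Finset.card_univ, Fintype.card_fin, nsmul_eq_mul]
  ring

/-- Let `𝔥 = 𝔰𝔩(p,ℂ) ⊕ 𝔰𝔩(q,ℂ) ⊕ 𝔰𝔩(r,ℂ)` with `p ≥ q ≥ r ≥ 1` act on
`V = (ℂ^p ⊗ (ℂ^q)*) ⊕ (ℂ^q ⊗ (ℂ^r)*) ⊕ (ℂ^p ⊗ (ℂ^r)*)`.  In terms of real traceless diagonal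
Cartan elements, `ρ_𝔥 ≤ 2ρ_V` holds if and only if `p ≤ q + r + 1`. -/
theorem sl_three_factors_rho_iff (p q r : ℕ) (hr : 1 ≤ r) (hrq : r ≤ q) (hqp : q ≤ p) :
    (∀ (x : Fin p → ℝ) (y : Fin q → ℝ) (z : Fin r → ℝ),
      (∑ i, x i) = 0 → (∑ j, y j) = 0 → (∑ k, z k) = 0 →
      ((∑ i : Fin p, ∑ i' : Fin p, if i < i' then |x i - x i'| else 0) +
        (∑ j : Fin q, ∑ j' : Fin q, if j < j' then |y j - y j'| else 0) +
        (∑ k : Fin r, ∑ k' : Fin r, if k < k' then |z k - z k'| else 0)) ≤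
      2 * ((1 / 2) * ((∑ i : Fin p, ∑ j : Fin q, |x i - y j|) +
        (∑ j : Fin q, ∑ k : Fin r, |y j - z k|) +
        (∑ i : Fin p, ∑ k : Fin r, |x i - z k|)))) ↔
    p ≤ q + r + 1 := by
  constructor
  · intro H
    by_contra hc
    push_neg at hc
    have hp2 : 2 ≤ p := by omega
    have key : ((∑ i : Fin p, ∑ i' : Fin p, if i < i' then |ctr p i - ctr p i'| else 0) +
        (∑ j : Fin q, ∑ j' : Fin q, if j < j' then |(0:ℝ) - (0:ℝ)| else 0) +
        (∑ k : Fin r, ∑ k' : Fin r, if k < k' then |(0:ℝ) - (0:ℝ)| else 0)) ≤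
        2 * ((1 / 2) * ((∑ i : Fin p, ∑ j : Fin q, |ctr p i - (0:ℝ)|) +
          (∑ j : Fin q, ∑ k : Fin r, |(0:ℝ) - (0:ℝ)|) +
          (∑ i : Fin p, ∑ k : Fin r, |ctr p i - (0:ℝ)|))) :=
      H (ctr p) (fun _ => 0) (fun _ => 0) (ctr_sum p hp2) (by simp) (by simp)
    have hA : (∑ i : Fin p, ∑ i' : Fin p, if i < i' then |ctr p i - ctr p i'| else 0)
        = (1/2) * (4 * p - 4) := by
      rw [half_sum (fun i i' => |ctr p i - ctr p i'|) (fun i j => abs_sub_comm _ _)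
        (fun i => by simp), ctr_T1 p hp2]
    have hB : (∑ j : Fin q, ∑ j' : Fin q, if j < j' then |(0:ℝ) - (0:ℝ)| else 0) = 0 := by simp
    have hC : (∑ k : Fin r, ∑ k' : Fin r, if k < k' then |(0:ℝ) - (0:ℝ)| else 0) = 0 := by simp
    have hD : (∑ i : Fin p, ∑ j : Fin q, |ctr p i - (0:ℝ)|) = q * 2 := by
      have h1 : ∀ i, (∑ _j : Fin q, |ctr p i - (0:ℝ)|) = (q:ℝ) * |ctr p i| := fun i => by
        rw [Finset.sum_const, Finset.card_univ, Fintype.card_fin, nsmul_eq_mul, sub_zero]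
      rw [Finset.sum_congr rfl (fun i _ => h1 i), ← Finset.mul_sum, ctr_abs_sum p hp2]
    have hE : (∑ j : Fin q, ∑ k : Fin r, |(0:ℝ) - (0:ℝ)|) = 0 := by simp
    have hF : (∑ i : Fin p, ∑ k : Fin r, |ctr p i - (0:ℝ)|) = r * 2 := by
      have h1 : ∀ i, (∑ _k : Fin r, |ctr p i - (0:ℝ)|) = (r:ℝ) * |ctr p i| := fun i => by
        rw [Finset.sum_const, Finset.card_univ, Fintype.card_fin, nsmul_eq_mul, sub_zero]
      rw [Finset.sum_congr rfl (fun i _ => h1 i), ← Finset.mul_sum, ctr_abs_sum p hp2]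
    rw [hA, hB, hC, hD, hE, hF] at key
    have hcast : (q:ℝ) + r + 2 ≤ p := by exact_mod_cast Nat.add_one_le_iff.2 hc
    linarith [key]
  · intro hp x y z _ _ _
    exact forward_ineq p q r hrq hqp hp x y z
end
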